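/- arXiv:2405.15048 — 11 statements merged into one kernel-verified Lean document; each statement's English description precedes it below -/
import Mathlib

section
/- Let a > 1 and define F : ℝ⁴ → ℝ⁴ by F(x,y,pₓ,p_y) = (pₓ, p_y, −2x + a·((x+1)/√((x+1)²+y²) + (x−1)/√((x−1)²+y²)), −2y + a·y·(1/√((x+1)²+y²) + 1/√((x−1)²+y²))). Then for every point (x,y,pₓ,p_y) with (x,y) ∉ {(1,0),(−1,0)}, one has F(x,y,pₓ,p_y) = 0 if and only if (x,y,pₓ,p_y) is one of the five points (0,0,0,0), (0,√(a²−1),0,0), (0,−√(a²−1),0,0), (a,0,0,0), (−a,0,0,0). -/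
/-!
Write `r₁, r₂` for the distances to the centers. Off the axis `y = 0`, the second equation
says `a / r₁ + a / r₂ = 2`, and subtracting `x` times this from the first leaves
`a / r₁ = a / r₂`; hence `r₁ = r₂ = a`, i.e. `x = 0` and `1 + y² = a²`. On the axis the
unit vectors towards the centers are `±1`, so the first equation reads `2x = a (±1 ± 1)`,
giving `x = 0` between the centers and `x = ±a` outside them.
-/

open Real

noncomputable def twoCenterForceX (a x y : ℝ) : ℝ :=
  -2 * x + a * ((x + 1) / √((x + 1) ^ 2 + y ^ 2) + (x - 1) / √((x - 1) ^ 2 + y ^ 2))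

noncomputable def twoCenterForceY (a x y : ℝ) : ℝ :=
  -2 * y + a * y * (1 / √((x + 1) ^ 2 + y ^ 2) + 1 / √((x - 1) ^ 2 + y ^ 2))

lemma sq_eq_iff_eq_sqrt_or_eq_neg_sqrt {y c : ℝ} (hc : 0 ≤ c) :
    y ^ 2 = c ↔ y = √c ∨ y = -√c := by
  rw [← sq_eq_sq_iff_eq_or_eq_neg, sq_sqrt hc]

lemma linear_force_eq_zero_iff {x y p q : ℝ} (hy : y ≠ 0) :
    -2 * x + (p * (x + 1) + q * (x - 1)) = 0 ∧ y * (-2 + (p + q)) = 0 ↔ p = 1 ∧ q = 1 := by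
  rw [mul_eq_zero, or_iff_right hy]
  constructor
  · rintro ⟨hX, hY⟩
    exact ⟨by linear_combination (hX - x * hY + hY) / 2,
      by linear_combination (-hX + x * hY + hY) / 2⟩
  · rintro ⟨rfl, rfl⟩
    constructor <;> ring

lemma twoCenter_equilibrium_off_axis_iff {a x y : ℝ} (ha : 0 < a) (hy : y ≠ 0) :
    twoCenterForceX a x y = 0 ∧ twoCenterForceY a x y = 0 ↔ x = 0 ∧ 1 + y ^ 2 = a ^ 2 := by
  set r₁ := √((x + 1) ^ 2 + y ^ 2)
  set r₂ := √((x - 1) ^ 2 + y ^ 2)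
  have hr₁_pos : 0 < r₁ := sqrt_pos.2 (by positivity)
  have hr₂_pos : 0 < r₂ := sqrt_pos.2 (by positivity)
  have hX : twoCenterForceX a x y = -2 * x + (a / r₁ * (x + 1) + a / r₂ * (x - 1)) := by
    unfold twoCenterForceX; ring
  have hY : twoCenterForceY a x y = y * (-2 + (a / r₁ + a / r₂)) := by
    unfold twoCenterForceY; ring
  rw [hX, hY, linear_force_eq_zero_iff hy, div_eq_one_iff_eq hr₁_pos.ne',
    div_eq_one_iff_eq hr₂_pos.ne', eq_comm (a := a), eq_comm (a := a),
    sqrt_eq_iff_eq_sq (by positivity) ha.le, sqrt_eq_iff_eq_sq (by positivity) ha.le]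
  constructor
  · rintro ⟨h₁, h₂⟩
    constructor <;> nlinarith
  · rintro ⟨rfl, h⟩
    constructor <;> linarith

lemma twoCenterForceX_on_axis (a x : ℝ) :
    twoCenterForceX a x 0 = -2 * x + a * ((x + 1) / |x + 1| + (x - 1) / |x - 1|) := by
  simp [twoCenterForceX, sqrt_sq_eq_abs]

lemma twoCenter_equilibrium_on_axis_iff {a x : ℝ} (ha : 1 < a) (h₁ : x ≠ 1) (h₂ : x ≠ -1) :
    twoCenterForceX a x 0 = 0 ↔ x = 0 ∨ x = a ∨ x = -a := by
  rw [twoCenterForceX_on_axis]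
  rcases lt_or_gt_of_ne h₂ with hx | hx
  · rw [abs_of_neg (by linarith : x + 1 < 0), abs_of_neg (by linarith : x - 1 < 0),
      div_neg_self (by linarith), div_neg_self (by linarith)]
    constructor
    · intro h; right; right; linarith
    · rintro (rfl | rfl | rfl) <;> linarith
  rw [abs_of_pos (by linarith : 0 < x + 1), div_self (by linarith)]
  rcases lt_or_gt_of_ne h₁ with hx' | hx'
  · rw [abs_of_neg (by linarith : x - 1 < 0), div_neg_self (by linarith)]
    constructor
    · intro h; left; linarith
    · rintro (rfl | rfl | rfl) <;> linarith
  · rw [abs_of_pos (by linarith : 0 < x - 1), div_self (by linarith)]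
    constructor
    · intro h; right; left; linarith
    · rintro (rfl | rfl | rfl) <;> linarith

theorem twoCenter_equilibrium_iff {a x y : ℝ} (ha : 1 < a)
    (h₁ : (x, y) ≠ (1, 0)) (h₂ : (x, y) ≠ (-1, 0)) :
    twoCenterForceX a x y = 0 ∧ twoCenterForceY a x y = 0 ↔
      y = 0 ∧ (x = 0 ∨ x = a ∨ x = -a) ∨ x = 0 ∧ (y = √(a ^ 2 - 1) ∨ y = -√(a ^ 2 - 1)) := by
  have hs : 0 < √(a ^ 2 - 1) := sqrt_pos.2 (by nlinarith)
  rcases eq_or_ne y 0 with rfl | hy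
  · have hY : twoCenterForceY a x 0 = 0 := by simp [twoCenterForceY]
    rw [twoCenter_equilibrium_on_axis_iff ha (by simpa using h₁) (by simpa using h₂)]
    simp [hY, hs.ne, hs.ne']
  · rw [twoCenter_equilibrium_off_axis_iff (by linarith) hy, add_comm, ← eq_sub_iff_add_eq,
      sq_eq_iff_eq_sqrt_or_eq_neg_sqrt (by nlinarith)]
    simp [hy]

/-- For `a > 1`, the equilibrium points of the planar two-center problem
with harmonic-like interactions are exactly the five points
`(0,0,0,0)`, `(0, ±√(a²−1), 0, 0)`, `(±a, 0, 0, 0)`. -/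
theorem equilibria_of_two_center_a_gt_one (a : ℝ) (ha : 1 < a)
    (F : ℝ → ℝ → ℝ → ℝ → ℝ × ℝ × ℝ × ℝ)
    (hF : ∀ x y px py, F x y px py =
      (px, py,
        -2 * x + a * ((x + 1) / Real.sqrt ((x + 1) ^ 2 + y ^ 2) +
          (x - 1) / Real.sqrt ((x - 1) ^ 2 + y ^ 2)),
        -2 * y + a * y * (1 / Real.sqrt ((x + 1) ^ 2 + y ^ 2) +
          1 / Real.sqrt ((x - 1) ^ 2 + y ^ 2))))
    (x y px py : ℝ)
    (h1 : (x, y) ≠ ((1 : ℝ), (0 : ℝ)))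
    (h2 : (x, y) ≠ ((-1 : ℝ), (0 : ℝ))) :
    F x y px py = (0, 0, 0, 0) ↔
      ((x, y, px, py) = ((0 : ℝ), (0 : ℝ), (0 : ℝ), (0 : ℝ)) ∨
       (x, y, px, py) = ((0 : ℝ), Real.sqrt (a ^ 2 - 1), (0 : ℝ), (0 : ℝ)) ∨
       (x, y, px, py) = ((0 : ℝ), -Real.sqrt (a ^ 2 - 1), (0 : ℝ), (0 : ℝ)) ∨
       (x, y, px, py) = (a, (0 : ℝ), (0 : ℝ), (0 : ℝ)) ∨
       (x, y, px, py) = (-a, (0 : ℝ), (0 : ℝ), (0 : ℝ))) := by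
  have h := twoCenter_equilibrium_iff ha h1 h2
  rw [twoCenterForceX, twoCenterForceY] at h
  rw [hF]
  simp only [Prod.mk.injEq]
  tauto
end

section
/- Let 0 ≤ a < 1 and define F : ℝ⁴ → ℝ⁴ by F(x,y,pₓ,p_y) = (pₓ, p_y, −2x + a·((x+1)/√((x+1)²+y²) + (x−1)/√((x−1)²+y²)), −2y + a·y·(1/√((x+1)²+y²) + 1/√((x−1)²+y²))). Then for every point (x,y,pₓ,p_y) with (x,y) ∉ {(1,0),(−1,0)}, one has F(x,y,pₓ,p_y) = 0 if and only if (x,y,pₓ,p_y) = (0,0,0,0). -/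
set_option maxHeartbeats 1000000


/-- For `0 ≤ a < 1`, the only equilibrium point of the planar two-center
problem with harmonic-like interactions is the origin `(0,0,0,0)`. -/
theorem equilibria_of_two_center_a_lt_one (a : ℝ) (ha0 : 0 ≤ a) (ha1 : a < 1)
    (F : ℝ → ℝ → ℝ → ℝ → ℝ × ℝ × ℝ × ℝ)
    (hF : ∀ x y px py, F x y px py =
      (px, py,
        -2 * x + a * ((x + 1) / Real.sqrt ((x + 1) ^ 2 + y ^ 2) +
          (x - 1) / Real.sqrt ((x - 1) ^ 2 + y ^ 2)),
        -2 * y + a * y * (1 / Real.sqrt ((x + 1) ^ 2 + y ^ 2) +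
          1 / Real.sqrt ((x - 1) ^ 2 + y ^ 2))))
    (x y px py : ℝ)
    (h1 : (x, y) ≠ ((1 : ℝ), (0 : ℝ)))
    (h2 : (x, y) ≠ ((-1 : ℝ), (0 : ℝ))) :
    F x y px py = (0, 0, 0, 0) ↔
      (x, y, px, py) = ((0 : ℝ), (0 : ℝ), (0 : ℝ), (0 : ℝ)) := by
  rw [hF]
  simp only [Prod.mk.injEq, ne_eq] at h1 h2 ⊢
  constructor
  · rintro ⟨hpx, hpy, h3, h4⟩
    have h1' : x ≠ 1 ∨ y ≠ 0 := by
      by_contra hc; push_neg at hc; exact h1 ⟨hc.1, hc.2⟩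
    have h2' : x ≠ -1 ∨ y ≠ 0 := by
      by_contra hc; push_neg at hc; exact h2 ⟨hc.1, hc.2⟩
    have hq1 : 0 < (x + 1) ^ 2 + y ^ 2 := by
      rcases h2' with h | h
      · have hx : x + 1 ≠ 0 := fun hc => h (by linarith)
        have : 0 < (x + 1) ^ 2 := by positivity
        nlinarith [sq_nonneg y]
      · have : 0 < y ^ 2 := by positivity
        nlinarith [sq_nonneg (x + 1)]
    have hq2 : 0 < (x - 1) ^ 2 + y ^ 2 := by
      rcases h1' with h | h
      · have hx : x - 1 ≠ 0 := fun hc => h (by linarith)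
        have : 0 < (x - 1) ^ 2 := by positivity
        nlinarith [sq_nonneg y]
      · have : 0 < y ^ 2 := by positivity
        nlinarith [sq_nonneg (x - 1)]
    set r1 := Real.sqrt ((x + 1) ^ 2 + y ^ 2) with hr1def
    set r2 := Real.sqrt ((x - 1) ^ 2 + y ^ 2) with hr2def
    have hr1 : 0 < r1 := Real.sqrt_pos.mpr hq1
    have hr2 : 0 < r2 := Real.sqrt_pos.mpr hq2
    have hr1s : r1 ^ 2 = (x + 1) ^ 2 + y ^ 2 := Real.sq_sqrt hq1.le
    have hr2s : r2 ^ 2 = (x - 1) ^ 2 + y ^ 2 := Real.sq_sqrt hq2.le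
    have hy : y = 0 := by
      by_contra hy
      -- from h4: 2 = a * (1/r1 + 1/r2)
      have h4' : 2 = a * (1 / r1 + 1 / r2) := by
        have := h4
        have hfac : y * (-2 + a * (1 / r1 + 1 / r2)) = 0 := by ring_nf; ring_nf at this; linarith
        rcases mul_eq_zero.mp hfac with h | h
        · exact absurd h hy
        · linarith
      have ha : 0 < a := by
        rcases lt_or_eq_of_le ha0 with h | h
        · exact h
        · exfalso; rw [← h] at h4'; simp at h4'
      -- derive a/r1 = a/r2
      have e : a * ((x + 1) / r1 + (x - 1) / r2)
          = x * (a * (1 / r1 + 1 / r2)) + (a / r1 - a / r2) := by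
        field_simp; ring
      have key : a / r1 = a / r2 := by
        rw [e, ← h4'] at h3; linarith
      have hrr : r1 = r2 := by
        rw [div_eq_div_iff hr1.ne' hr2.ne'] at key
        exact mul_left_cancel₀ ha.ne' (by linarith)
      have hx0 : x = 0 := by
        have : r1 ^ 2 = r2 ^ 2 := by rw [hrr]
        nlinarith
      have hr1ge : 1 ≤ r1 := by
        have : r1 ^ 2 = 1 + y ^ 2 := by rw [hr1s, hx0]; ring
        nlinarith [sq_nonneg y]
      -- 2 = 2a/r1 so r1 = a < 1, contradiction
      have : 2 * r1 = 2 * a := by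
        rw [hrr] at h4'
        field_simp at h4'
        linarith
      linarith
    subst hy
    have hx1 : x ≠ 1 := by rcases h1' with h | h; exact h; exact absurd rfl h
    have hx2 : x ≠ -1 := by rcases h2' with h | h; exact h; exact absurd rfl h
    have hs1 : r1 = |x + 1| := by
      rw [hr1def]; rw [show (x + 1) ^ 2 + (0:ℝ) ^ 2 = (x + 1) ^ 2 by ring,
        Real.sqrt_sq_eq_abs]
    have hs2 : r2 = |x - 1| := by
      rw [hr2def]; rw [show (x - 1) ^ 2 + (0:ℝ) ^ 2 = (x - 1) ^ 2 by ring,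
        Real.sqrt_sq_eq_abs]
    refine ⟨?_, rfl, hpx, hpy⟩
    rcases lt_trichotomy x 1 with hlt | heq | hgt
    · rcases lt_trichotomy x (-1) with hlt2 | heq2 | hgt2
      · -- x < -1
        exfalso
        rw [hs1, hs2, abs_of_neg (by linarith : x + 1 < 0),
          abs_of_neg (by linarith : x - 1 < 0)] at h3
        have hne1 : x + 1 ≠ 0 := fun hc => hx2 (by linarith)
        have hne2 : x - 1 ≠ 0 := fun hc => hx1 (by linarith)
        rw [div_neg, div_self hne1, div_neg, div_self hne2] at h3
        linarith
      · exact absurd heq2 hx2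
      · -- -1 < x < 1
        rw [hs1, hs2, abs_of_pos (by linarith : 0 < x + 1),
          abs_of_neg (by linarith : x - 1 < 0)] at h3
        have hne1 : x + 1 ≠ 0 := ne_of_gt (by linarith)
        have hne2 : x - 1 ≠ 0 := fun hc => hx1 (by linarith)
        rw [div_self hne1, div_neg, div_self hne2] at h3
        linarith
    · exact absurd heq hx1
    · -- x > 1
      exfalso
      rw [hs1, hs2, abs_of_pos (by linarith : 0 < x + 1),
        abs_of_pos (by linarith : 0 < x - 1)] at h3
      have hne1 : x + 1 ≠ 0 := ne_of_gt (by linarith)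
      have hne2 : x - 1 ≠ 0 := ne_of_gt (by linarith)
      rw [div_self hne1, div_self hne2] at h3
      linarith
  · rintro ⟨hx, hy, hpx, hpy⟩
    subst hx; subst hy; subst hpx; subst hpy
    norm_num
end

section
/- Let 0 ≤ a ≤ 1 and let U(x,y) = (1/2)·((√((x+1)² + y²) − a)² + (√((x−1)² + y²) − a)²). Then U(x,y) ≥ (1−a)² for all (x,y) ∈ ℝ², with equality if and only if (x,y) = (0,0). In particular, for 0 ≤ a ≤ 1 the origin is the unique global minimizer of U and the minimum value is (1−a)². -/
private lemma sqrt_ge_aux (s y : ℝ) : s ≤ Real.sqrt (s ^ 2 + y ^ 2) := by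
  calc s ≤ |s| := le_abs_self _
    _ = Real.sqrt (s ^ 2) := (Real.sqrt_sq_eq_abs _).symm
    _ ≤ Real.sqrt (s ^ 2 + y ^ 2) := Real.sqrt_le_sqrt (by nlinarith [sq_nonneg y])

/-- For `0 ≤ a ≤ 1`, the potential `U` satisfies `U(x,y) ≥ (1−a)²`
everywhere, with equality exactly at the origin: the origin is the unique global
minimizer and the minimum value is `(1−a)²`. -/
theorem potential_global_minimizer_a_le_one (a : ℝ) (ha0 : 0 ≤ a) (ha1 : a ≤ 1)
    (U : ℝ → ℝ → ℝ)
    (hU : ∀ x y, U x y = (1 / 2) *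
      ((Real.sqrt ((x + 1) ^ 2 + y ^ 2) - a) ^ 2 +
       (Real.sqrt ((x - 1) ^ 2 + y ^ 2) - a) ^ 2)) :
    (∀ x y : ℝ, (1 - a) ^ 2 ≤ U x y) ∧
    (∀ x y : ℝ, U x y = (1 - a) ^ 2 ↔ (x, y) = ((0 : ℝ), (0 : ℝ))) := by
  have key : ∀ x y : ℝ, 2 ≤ Real.sqrt ((x + 1) ^ 2 + y ^ 2) +
      Real.sqrt ((x - 1) ^ 2 + y ^ 2) := by
    intro x y
    have h1 := sqrt_ge_aux (x + 1) y
    have h2 := sqrt_ge_aux (1 - x) y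
    have h2' : Real.sqrt ((1 - x) ^ 2 + y ^ 2) = Real.sqrt ((x - 1) ^ 2 + y ^ 2) := by
      ring_nf
    linarith [h2'.symm ▸ h2]
  constructor
  · intro x y
    rw [hU]
    set s1 := Real.sqrt ((x + 1) ^ 2 + y ^ 2)
    set s2 := Real.sqrt ((x - 1) ^ 2 + y ^ 2)
    have hsum : 2 ≤ s1 + s2 := key x y
    nlinarith [sq_nonneg (s1 - s2),
      mul_nonneg (by linarith : (0:ℝ) ≤ s1 + s2 - 2) (by linarith : (0:ℝ) ≤ s1 + s2 + 2 - 4 * a)]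
  · intro x y
    constructor
    · intro h
      rw [hU] at h
      set s1 := Real.sqrt ((x + 1) ^ 2 + y ^ 2) with hs1def
      set s2 := Real.sqrt ((x - 1) ^ 2 + y ^ 2) with hs2def
      have hsum : 2 ≤ s1 + s2 := key x y
      have hsq1 : s1 ^ 2 = (x + 1) ^ 2 + y ^ 2 := Real.sq_sqrt (by positivity)
      have hsq2 : s2 ^ 2 = (x - 1) ^ 2 + y ^ 2 := Real.sq_sqrt (by positivity)
      have heq : s1 = s2 := by
        have h0 : (s1 - s2) ^ 2 ≤ 0 := by
          nlinarith [mul_nonneg (by linarith : (0:ℝ) ≤ s1 + s2 - 2)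
            (by linarith : (0:ℝ) ≤ s1 + s2 + 2 - 4 * a)]
        have := sq_nonneg (s1 - s2)
        have : (s1 - s2) ^ 2 = 0 := le_antisymm h0 this
        have := pow_eq_zero_iff (n := 2) (by norm_num) |>.mp this
        linarith
      have hs1ge : 1 ≤ s1 := by linarith
      have hs1 : s1 = 1 := by
        nlinarith [sq_nonneg (s1 - 1),
          mul_nonneg (by linarith : (0:ℝ) ≤ s1 - 1) (by linarith : (0:ℝ) ≤ 2 - 2 * a)]
      have hs2 : s2 = 1 := heq ▸ hs1
      rw [hs1] at hsq1
      rw [hs2] at hsq2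
      have hx : x = 0 := by nlinarith
      have hy2 : y ^ 2 = 0 := by nlinarith
      have hy : y = 0 := pow_eq_zero_iff (n := 2) (by norm_num) |>.mp hy2
      simp [hx, hy]
    · intro h
      obtain ⟨hx, hy⟩ := Prod.mk.injEq .. ▸ h
      subst hx; subst hy
      rw [hU]
      norm_num
      ring
end

section
/- Let a > 1 and set g = √(a²−1). The Jacobian matrix of the vector field F(x,y,pₓ,p_y) = (pₓ, p_y, −2x + a·((x+1)/√((x+1)²+y²) + (x−1)/√((x−1)²+y²)), −2y + a·y·(1/√((x+1)²+y²) + 1/√((x−1)²+y²))) at the equilibrium point (0, g, 0, 0) is the 4×4 real matrix J with rows (0,0,1,0), (0,0,0,1), (−2/a², 0, 0, 0), (0, −2(a²−1)/a², 0, 0), and the characteristic polynomial of J equals (t² + 2/a²)·(t² + 2(a²−1)/a²); in particular the eigenvalues of J (over ℂ) are ±i·√2/a and ±i·√(2(a²−1))/a, all purely imaginary. -/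
/-!
At the equilibrium `(0, g)` both centres lie at distance `a`, because `1 + g² = a²`. The
differential of `(u, v) ↦ (u, v) / √(u² + v²)` at a point of norm `r` is
`(v² du - uv dv, u² dv - uv du) / r³`; summing over the two centres, which are mirror images
in the `y`-axis, the mixed terms cancel. The Jacobian is therefore that of two decoupled
oscillators `ẍ = -α x`, `ÿ = -β y`, whose characteristic polynomial is `(t² + α)(t² + β)`,
with roots `±i√α`, `±i√β`.
-/

open Polynomial

section UnitVector

variable {E : Type*} [NormedAddCommGroup E] [NormedSpace ℝ E] {u v : E → ℝ}
  {u' v' : E →L[ℝ] ℝ} {p : E} {r : ℝ}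

theorem HasFDerivAt.div_sqrt_sq_add_sq_left (hu : HasFDerivAt u u' p) (hv : HasFDerivAt v v' p)
    (hr : u p ^ 2 + v p ^ 2 = r ^ 2) (hr0 : 0 < r) :
    HasFDerivAt (fun q => u q / √(u q ^ 2 + v q ^ 2))
      ((r ^ 3)⁻¹ • v p • (v p • u' - u p • v')) p := by
  have hs : √(u p ^ 2 + v p ^ 2) = r := by rw [hr, Real.sqrt_sq hr0.le]
  have hsqrt := ((hu.pow 2).fun_add (hv.pow 2)).sqrt (by rw [hr]; positivity)
  simp only [div_eq_mul_inv]
  refine (hu.mul ((hasDerivAt_inv (by rw [hs]; positivity)).comp_hasFDerivAt p hsqrt))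
    |>.congr_fderiv ?_
  ext w
  simp [hs, -Real.sqrt_inv]
  field_simp
  linear_combination (-(u' w)) * hr

theorem HasFDerivAt.div_sqrt_sq_add_sq_right (hu : HasFDerivAt u u' p) (hv : HasFDerivAt v v' p)
    (hr : u p ^ 2 + v p ^ 2 = r ^ 2) (hr0 : 0 < r) :
    HasFDerivAt (fun q => v q / √(u q ^ 2 + v q ^ 2))
      ((r ^ 3)⁻¹ • u p • (u p • v' - v p • u')) p := by
  simp only [add_comm (u _ ^ 2)] at hr ⊢
  exact hv.div_sqrt_sq_add_sq_left hu hr hr0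

end UnitVector

section DecoupledOscillators

/-- The system `ẍ = -α x`, `ÿ = -β y` written as a first-order system in `(x, y, ẋ, ẏ)`. -/
def decoupledOscillators {R : Type*} [Ring R] (α β : R) : Matrix (Fin 4) (Fin 4) R :=
  !![0, 0, 1, 0; 0, 0, 0, 1; -α, 0, 0, 0; 0, -β, 0, 0]

theorem decoupledOscillators_map {R S : Type*} [Ring R] [Ring S] (f : R →+* S) (α β : R) :
    (decoupledOscillators α β).map f = decoupledOscillators (f α) (f β) := by
  ext i j
  fin_cases i <;> fin_cases j <;> simp [decoupledOscillators]

theorem charpoly_decoupledOscillators {R : Type*} [CommRing R] (α β : R) :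
    (decoupledOscillators α β).charpoly = (X ^ 2 + C α) * (X ^ 2 + C β) := by
  rw [Matrix.charpoly, Matrix.det_succ_row_zero]
  simp [decoupledOscillators, Matrix.charmatrix_apply, Fin.sum_univ_succ, Matrix.det_fin_three,
    Matrix.diagonal_apply, Fin.succAbove]
  ring

theorem spectrum_decoupledOscillators {K : Type*} [Field K] (w₁ w₂ : K) :
    spectrum K (decoupledOscillators (-w₁ ^ 2) (-w₂ ^ 2)) = {w₁, -w₁, w₂, -w₂} := by
  ext z
  simp only [Matrix.mem_spectrum_iff_isRoot_charpoly, charpoly_decoupledOscillators, IsRoot.def,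
    eval_mul, eval_add, eval_pow, eval_X, eval_C, mul_eq_zero, ← sub_eq_add_neg, sub_eq_zero,
    sq_eq_sq_iff_eq_or_eq_neg, Set.mem_insert_iff, Set.mem_singleton_iff, or_assoc]

end DecoupledOscillators

noncomputable def twoCenterField (a : ℝ) (v : Fin 4 → ℝ) : Fin 4 → ℝ :=
  ![v 2, v 3,
    -2 * v 0 + a * ((v 0 + 1) / Real.sqrt ((v 0 + 1) ^ 2 + (v 1) ^ 2) +
      (v 0 - 1) / Real.sqrt ((v 0 - 1) ^ 2 + (v 1) ^ 2)),
    -2 * v 1 + a * v 1 * (1 / Real.sqrt ((v 0 + 1) ^ 2 + (v 1) ^ 2) +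
      1 / Real.sqrt ((v 0 - 1) ^ 2 + (v 1) ^ 2))]

theorem hasFDerivAt_twoCenterField {a g : ℝ} (ha : 0 < a) (hg : g ^ 2 = a ^ 2 - 1) :
    HasFDerivAt (twoCenterField a)
      (Matrix.toLin'
        (decoupledOscillators (2 / a ^ 2) (2 * (a ^ 2 - 1) / a ^ 2))).toContinuousLinearMap
      ![0, g, 0, 0] := by
  set p : Fin 4 → ℝ := ![0, g, 0, 0]
  have hx := hasFDerivAt_apply (𝕜 := ℝ) 0 p
  have hy := hasFDerivAt_apply (𝕜 := ℝ) 1 p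
  have hr₁ : (p 0 + 1) ^ 2 + p 1 ^ 2 = a ^ 2 := by simp [p]; linarith
  have hr₂ : (p 0 - 1) ^ 2 + p 1 ^ 2 = a ^ 2 := by simp [p]; linarith
  rw [hasFDerivAt_pi']
  intro i
  fin_cases i
  · refine (hasFDerivAt_apply 2 p).congr_fderiv ?_
    ext w
    simp [decoupledOscillators, dotProduct, Fin.sum_univ_four]
  · refine (hasFDerivAt_apply 3 p).congr_fderiv ?_
    ext w
    simp [decoupledOscillators, dotProduct, Fin.sum_univ_four]
  · refine ((hx.const_mul (-2)).add (((hx.add_const 1).div_sqrt_sq_add_sq_left hy hr₁ ha).add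
      ((hx.sub_const 1).div_sqrt_sq_add_sq_left hy hr₂ ha) |>.const_mul a)).congr_fderiv ?_
    ext w
    simp [p, decoupledOscillators, dotProduct, Fin.sum_univ_four]
    field_simp
    linear_combination 2 * w 0 * hg
  · have hfun : (fun v => twoCenterField a v 3) = fun v => -2 * v 1 +
        a * (v 1 / √((v 0 + 1) ^ 2 + v 1 ^ 2) + v 1 / √((v 0 - 1) ^ 2 + v 1 ^ 2)) := by
      funext v
      simp only [twoCenterField, Matrix.cons_val, one_div]
      ring
    simp only [Fin.reduceFinMk, hfun]
    refine ((hy.const_mul (-2)).add (((hx.add_const 1).div_sqrt_sq_add_sq_right hy hr₁ ha).add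
      ((hx.sub_const 1).div_sqrt_sq_add_sq_right hy hr₂ ha) |>.const_mul a)).congr_fderiv ?_
    ext w
    simp [p, decoupledOscillators, dotProduct, Fin.sum_univ_four]
    field_simp
    ring

theorem Complex.I_mul_sqrt_div_sq {c : ℝ} (hc : 0 ≤ c) (a : ℝ) :
    (I * (√c / a)) ^ 2 = -((c / a ^ 2 : ℝ) : ℂ) := by
  rw [mul_pow, div_pow, ← ofReal_pow, Real.sq_sqrt hc, I_sq]
  push_cast
  ring

/-- For `a > 1` and `g = √(a²−1)`, the Jacobian matrix of the vector field
`F` at the equilibrium `(0, g, 0, 0)` is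
`J = [[0,0,1,0],[0,0,0,1],[−2/a²,0,0,0],[0,−2(a²−1)/a²,0,0]]`, its characteristic
polynomial is `(t² + 2/a²)(t² + 2(a²−1)/a²)`, and its eigenvalues over `ℂ` are
`±i√2/a` and `±i√(2(a²−1))/a`, all purely imaginary. -/
theorem jacobian_at_equilibrium (a : ℝ) (ha : 1 < a) (g : ℝ)
    (hg : g = Real.sqrt (a ^ 2 - 1))
    (F : (Fin 4 → ℝ) → (Fin 4 → ℝ))
    (hF : ∀ v : Fin 4 → ℝ, F v =
      ![v 2, v 3,
        -2 * v 0 + a * ((v 0 + 1) / Real.sqrt ((v 0 + 1) ^ 2 + (v 1) ^ 2) +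
          (v 0 - 1) / Real.sqrt ((v 0 - 1) ^ 2 + (v 1) ^ 2)),
        -2 * v 1 + a * v 1 * (1 / Real.sqrt ((v 0 + 1) ^ 2 + (v 1) ^ 2) +
          1 / Real.sqrt ((v 0 - 1) ^ 2 + (v 1) ^ 2))])
    (J : Matrix (Fin 4) (Fin 4) ℝ)
    (hJ : J = !![0, 0, 1, 0;
                 0, 0, 0, 1;
                 -2 / a ^ 2, 0, 0, 0;
                 0, -2 * (a ^ 2 - 1) / a ^ 2, 0, 0]) :
    (fderiv ℝ F ![0, g, 0, 0]).toLinearMap = Matrix.toLin' J ∧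
    J.charpoly = (Polynomial.X ^ 2 + Polynomial.C (2 / a ^ 2)) *
      (Polynomial.X ^ 2 + Polynomial.C (2 * (a ^ 2 - 1) / a ^ 2)) ∧
    spectrum ℂ (J.map (fun x => (x : ℂ))) =
      {Complex.I * (Real.sqrt 2 / a), -(Complex.I * (Real.sqrt 2 / a)),
       Complex.I * (Real.sqrt (2 * (a ^ 2 - 1)) / a),
       -(Complex.I * (Real.sqrt (2 * (a ^ 2 - 1)) / a))} ∧
    (∀ z ∈ spectrum ℂ (J.map (fun x => (x : ℂ))), z.re = 0) := by
  have ha₀ : 0 < a := by linarith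
  have ha₁ : 0 ≤ a ^ 2 - 1 := by nlinarith
  have hg₂ : g ^ 2 = a ^ 2 - 1 := by rw [hg, Real.sq_sqrt ha₁]
  have hJ' : J = decoupledOscillators (2 / a ^ 2) (2 * (a ^ 2 - 1) / a ^ 2) := by
    rw [hJ, decoupledOscillators, neg_div, neg_mul, neg_div]
  obtain rfl : F = twoCenterField a := funext hF
  have hspec : spectrum ℂ (J.map (fun x => (x : ℂ))) =
      {Complex.I * (Real.sqrt 2 / a), -(Complex.I * (Real.sqrt 2 / a)),
       Complex.I * (Real.sqrt (2 * (a ^ 2 - 1)) / a),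
       -(Complex.I * (Real.sqrt (2 * (a ^ 2 - 1)) / a))} := by
    rw [← spectrum_decoupledOscillators, Complex.I_mul_sqrt_div_sq zero_le_two,
      Complex.I_mul_sqrt_div_sq (by positivity), neg_neg, neg_neg, hJ']
    exact congrArg _ (decoupledOscillators_map Complex.ofRealHom _ _)
  refine ⟨?_, by rw [hJ', charpoly_decoupledOscillators], hspec, ?_⟩
  · rw [(hasFDerivAt_twoCenterField ha₀ hg₂).fderiv, hJ']
    rfl
  · rw [hspec]
    simp [Complex.mul_re]
end

section
/- Let a > 1 and let U(x,y) = (1/2)·((√((x+1)² + y²) − a)² + (√((x−1)² + y²) − a)²). Then the one-variable function φ(x) = U(x,0) has a strict local maximum at x = 1; that is, there exists δ > 0 such that U(x,0) < U(1,0) for all x with 0 < |x − 1| < δ. -/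
/-- For `a > 1`, the restriction `φ(x) = U(x,0)` of the potential to the
`x`-axis has a strict local maximum at `x = 1`. -/
theorem strict_local_max_on_x_axis (a : ℝ) (ha : 1 < a)
    (U : ℝ → ℝ → ℝ)
    (hU : ∀ x y, U x y = (1 / 2) *
      ((Real.sqrt ((x + 1) ^ 2 + y ^ 2) - a) ^ 2 +
       (Real.sqrt ((x - 1) ^ 2 + y ^ 2) - a) ^ 2)) :
    ∃ δ > (0 : ℝ), ∀ x : ℝ, 0 < |x - 1| → |x - 1| < δ → U x 0 < U 1 0 := by
  refine ⟨min 1 (2 * (a - 1)), lt_min one_pos (by linarith), ?_⟩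
  intro x ht hδ
  rw [lt_min_iff] at hδ
  obtain ⟨hδ1, hδ2⟩ := hδ
  have hx1 : (0:ℝ) < x + 1 := by
    rcases abs_lt.mp hδ1 with ⟨h1, h2⟩; linarith
  rw [hU, hU]
  have e1 : Real.sqrt ((x + 1) ^ 2 + 0 ^ 2) = x + 1 := by
    rw [zero_pow (by norm_num), add_zero, Real.sqrt_sq hx1.le]
  have e2 : Real.sqrt ((x - 1) ^ 2 + 0 ^ 2) = |x - 1| := by
    rw [zero_pow (by norm_num), add_zero, Real.sqrt_sq_eq_abs]
  have e3 : Real.sqrt (((1:ℝ) + 1) ^ 2 + 0 ^ 2) = 2 := by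
    rw [zero_pow (by norm_num), add_zero, Real.sqrt_sq (by norm_num)]; norm_num
  have e4 : Real.sqrt (((1:ℝ) - 1) ^ 2 + 0 ^ 2) = 0 := by
    norm_num
  rw [e1, e2, e3, e4]
  rcases abs_cases (x - 1) with ⟨h, h'⟩ | ⟨h, h'⟩ <;> rw [h] <;> rw [h] at ht hδ1 hδ2 <;>
    nlinarith [ht, hδ1, hδ2]
end

section
/- Let a > 1 with a² ≠ 5, let h ∈ ℝ, set g = √(a²−1) and T = √2·a·π. Then for all ρ, s ∈ ℝ, (1/T)·∫₀ᵀ F11(θ,ρ,s) dθ = (sin(π g)·sin(g(πa + √2 s)/a) / (2√2·π·a³·(a²−5)·g)) · (2a²(a²−3)²h + (a²−5)ρ²·(cos(2√2 g s/a) + cos(2g(πa + √2 s)/a) + cos(2g(2πa + √2 s)/a) + cos(2πg)) − 2(a⁶ − 7a⁴ + 14a² − 4)ρ²), where F11(θ,ρ,s) = (1/(√2·a³))·sin(√2 g(θ+s)/a)·((a²−3)(a²(h−ρ²)+ρ²)·cos²(√2 θ/a) + 3ρ²·cos²(√2 g(θ+s)/a)). -/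
/-!
The substitution t = √2 θ / a maps one period [0, T] onto [0, 2π] and turns the integrand into
sin(g t + u) · (A cos² t + 3ρ² cos²(g t + u)) / (√2 a³) with u = √2 g s / a. Linearising cos² t
leaves sines of frequencies g and g ± 2, whose integrals over [0, 2π] all end at the same phase
u + 2πg, because the frequencies differ by integers; the second product is the derivative of
−cos³(g t + u) / (3g). Both integrals are thus multiples of cos u − cos (u + 2πg) =
2 sin(πg) sin(πg + u), and the factor a² − 5 = g² − 4 of the denominator comes from g ± 2.
-/

open Real intervalIntegral

theorem sin_mul_cos_sq_eq_sum_sin (x y : ℝ) :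
    sin x * cos y ^ 2 = sin x / 2 + sin (x + 2 * y) / 4 + sin (x - 2 * y) / 4 := by
  rw [sin_add, sin_sub, cos_two_mul, sin_two_mul]
  ring

theorem cos_pow_three_sub_cos_pow_three (u v : ℝ) :
    cos u ^ 3 - cos v ^ 3 =
      (cos u - cos v) * (cos (2 * u) + cos (u + v) + cos (2 * v) + cos (v - u) + 2) / 2 := by
  rw [cos_two_mul, cos_two_mul, cos_add, cos_sub]
  ring

theorem sin_mul_sin_add (x u : ℝ) : sin x * sin (x + u) = (cos u - cos (2 * x + u)) / 2 := by
  rw [cos_sub_cos, show (u + (2 * x + u)) / 2 = x + u by ring,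
    show (u - (2 * x + u)) / 2 = -x by ring, sin_neg]
  ring

theorem integral_sin_comp_mul_add {k : ℝ} (hk : k ≠ 0) (c a b : ℝ) :
    ∫ x in a..b, sin (k * x + c) = (cos (k * a + c) - cos (k * b + c)) / k := by
  rw [integral_comp_mul_add (fun x => sin x) hk, integral_sin, smul_eq_mul, inv_mul_eq_div]

theorem integral_sin_mul_cos_sq_comp_mul_add {k : ℝ} (hk : k ≠ 0) (c a b : ℝ) :
    ∫ x in a..b, sin (k * x + c) * cos (k * x + c) ^ 2 =
      (cos (k * a + c) ^ 3 - cos (k * b + c) ^ 3) / (3 * k) := by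
  rw [integral_comp_mul_add (fun x => sin x * cos x ^ 2) hk, integral_sin_mul_cos_sq,
    smul_eq_mul]
  field_simp

theorem integral_zero_two_pi_sin_mul_add_mul_cos_sq {g : ℝ} (hg : g ≠ 0) (hg2 : g ^ 2 ≠ 4)
    (u : ℝ) :
    ∫ t in (0)..2 * π, sin (g * t + u) * cos t ^ 2 =
      (g ^ 2 - 2) / (g * (g ^ 2 - 4)) * (cos u - cos (g * (2 * π) + u)) := by
  have hgp : g + 2 ≠ 0 := fun h => hg2 (by linear_combination (g - 2) * h)
  have hgm : g - 2 ≠ 0 := fun h => hg2 (by linear_combination (g + 2) * h)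
  have hint : ∀ k : ℝ,
      IntervalIntegrable (fun t => sin (k * t + u)) MeasureTheory.volume 0 (2 * π) :=
    fun k => (by fun_prop : Continuous fun t => sin (k * t + u)).intervalIntegrable _ _
  have hsplit : ∀ t, sin (g * t + u) * cos t ^ 2 =
      sin (g * t + u) / 2 + sin ((g + 2) * t + u) / 4 + sin ((g - 2) * t + u) / 4 := by
    intro t
    rw [sin_mul_cos_sq_eq_sum_sin]
    ring_nf
  simp_rw [hsplit]
  rw [integral_add ((hint g).div_const _ |>.add ((hint _).div_const _)) ((hint _).div_const _),
    integral_add ((hint g).div_const _) ((hint _).div_const _), integral_div, integral_div,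
    integral_div, integral_sin_comp_mul_add hg, integral_sin_comp_mul_add hgp,
    integral_sin_comp_mul_add hgm]
  have hp : cos ((g + 2) * (2 * π) + u) = cos (g * (2 * π) + u) := by
    conv_rhs => rw [← cos_add_int_mul_two_pi _ 2]
    push_cast
    ring_nf
  have hm : cos ((g - 2) * (2 * π) + u) = cos (g * (2 * π) + u) := by
    conv_lhs => rw [← cos_add_int_mul_two_pi _ 2]
    push_cast
    ring_nf
  simp only [mul_zero, zero_add, hp, hm]
  field_simp
  ring

theorem integral_zero_two_pi_sin_mul_add_mul_cos_sq_add_cos_sq {g : ℝ} (hg : g ≠ 0)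
    (hg2 : g ^ 2 ≠ 4) (A B u : ℝ) :
    ∫ t in (0)..2 * π, sin (g * t + u) * (A * cos t ^ 2 + B * cos (g * t + u) ^ 2) =
      A * (g ^ 2 - 2) / (g * (g ^ 2 - 4)) * (cos u - cos (g * (2 * π) + u)) +
        B * (cos u ^ 3 - cos (g * (2 * π) + u) ^ 3) / (3 * g) := by
  simp_rw [mul_add, mul_left_comm (sin _) A, mul_left_comm (sin _) B]
  rw [integral_add (by apply Continuous.intervalIntegrable; fun_prop)
      (by apply Continuous.intervalIntegrable; fun_prop),
    integral_const_mul, integral_const_mul, integral_zero_two_pi_sin_mul_add_mul_cos_sq hg hg2,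
    integral_sin_mul_cos_sq_comp_mul_add hg, mul_zero, zero_add]
  ring

open Real in
/-- closed form of the first averaged function `f₁(ρ,s)` for `a > 1`,
`a² ≠ 5`, where `g = √(a²−1)` and `T = √2·a·π`. -/
theorem averaged_function_f1_closed_form (a h : ℝ) (ha : 1 < a) (ha5 : a ^ 2 ≠ 5)
    (g T : ℝ) (hg : g = Real.sqrt (a ^ 2 - 1)) (hT : T = Real.sqrt 2 * a * π)
    (F11 : ℝ → ℝ → ℝ → ℝ)
    (hF11 : ∀ θ ρ s : ℝ, F11 θ ρ s =
      (1 / (Real.sqrt 2 * a ^ 3)) * Real.sin (Real.sqrt 2 * g * (θ + s) / a) *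
        ((a ^ 2 - 3) * (a ^ 2 * (h - ρ ^ 2) + ρ ^ 2) * Real.cos (Real.sqrt 2 * θ / a) ^ 2 +
         3 * ρ ^ 2 * Real.cos (Real.sqrt 2 * g * (θ + s) / a) ^ 2)) :
    ∀ ρ s : ℝ,
      (1 / T) * (∫ θ in (0 : ℝ)..T, F11 θ ρ s) =
        (Real.sin (π * g) * Real.sin (g * (π * a + Real.sqrt 2 * s) / a) /
          (2 * Real.sqrt 2 * π * a ^ 3 * (a ^ 2 - 5) * g)) *
        (2 * a ^ 2 * (a ^ 2 - 3) ^ 2 * h +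
         (a ^ 2 - 5) * ρ ^ 2 *
           (Real.cos (2 * Real.sqrt 2 * g * s / a) +
            Real.cos (2 * g * (π * a + Real.sqrt 2 * s) / a) +
            Real.cos (2 * g * (2 * π * a + Real.sqrt 2 * s) / a) +
            Real.cos (2 * π * g)) -
         2 * (a ^ 6 - 7 * a ^ 4 + 14 * a ^ 2 - 4) * ρ ^ 2) := by
  intro ρ s
  have ha0 : 0 < a := by linarith
  have hg2 : g ^ 2 = a ^ 2 - 1 := by rw [hg, sq_sqrt]; nlinarith
  have hg0 : 0 < g := by rw [hg]; exact sqrt_pos.2 (by nlinarith)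
  have hg4 : g ^ 2 ≠ 4 := by rw [hg2]; contrapose! ha5; linarith
  set A := (a ^ 2 - 3) * (a ^ 2 * (h - ρ ^ 2) + ρ ^ 2) with hA
  set u := √2 * g * s / a with hu
  have hF : ∀ θ, F11 θ ρ s = 1 / (√2 * a ^ 3) * (sin (g * (√2 / a * θ) + u) *
      (A * cos (√2 / a * θ) ^ 2 + 3 * ρ ^ 2 * cos (g * (√2 / a * θ) + u) ^ 2)) := by
    intro θ
    rw [hF11, show √2 * g * (θ + s) / a = g * (√2 / a * θ) + u by rw [hu]; ring,
      show √2 * θ / a = √2 / a * θ by ring]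
    ring
  have hT2 : √2 / a * T = 2 * π := by
    rw [hT]; field_simp; rw [sq_sqrt zero_le_two]
  simp_rw [hF]
  rw [integral_comp_mul_left (fun t => 1 / (√2 * a ^ 3) * (sin (g * t + u) *
      (A * cos t ^ 2 + 3 * ρ ^ 2 * cos (g * t + u) ^ 2))) (by positivity),
    mul_zero, hT2, smul_eq_mul, integral_const_mul,
    integral_zero_two_pi_sin_mul_add_mul_cos_sq_add_cos_sq hg0.ne' hg4,
    cos_pow_three_sub_cos_pow_three,
    show g * (π * a + √2 * s) / a = π * g + u by rw [hu]; field_simp,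
    sin_mul_sin_add, show 2 * (π * g) + u = g * (2 * π) + u by ring,
    show 2 * √2 * g * s / a = 2 * u by ring,
    show 2 * g * (π * a + √2 * s) / a = u + (g * (2 * π) + u) by rw [hu]; field_simp; ring,
    show 2 * g * (2 * π * a + √2 * s) / a = 2 * (g * (2 * π) + u) by rw [hu]; field_simp,
    show 2 * π * g = g * (2 * π) + u - u by ring, hT]
  field_simp
  rw [sq_sqrt zero_le_two, hg2, hA]
  ring
end

section
/- Let a > 1 with a² ≠ 5, let h ∈ ℝ, set g = √(a²−1) and T = √2·a·π. Then for all ρ ≠ 0 and all s ∈ ℝ, (1/T)·∫₀ᵀ F12(θ,ρ,s) dθ = (sin(π g)·cos(g(πa + √2 s)/a) / (4π·a²·(a²−5)·(a²−1)·ρ)) · (2a²(a²−3)²h + (a²−5)ρ²·(cos(2√2 g s/a) + cos(2g(πa + √2 s)/a) + cos(2g(2πa + √2 s)/a) − cos(2πg)) + 2(−3a⁶ + 21a⁴ − 43a² + 17)ρ²), where F12(θ,ρ,s) = (1/(4a²gρ))·cos(√2 g(θ+s)/a)·((a²−3)(a²(h−3ρ²)+3ρ²)·cos(2√2 θ/a)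 + (a²−3)a²h − 3(a⁴−4a²+2)ρ² + 3ρ²·cos(2√2 g(θ+s)/a)). -/
open Real

/-!
Product-to-sum turns the integrand into cosines of frequencies `α ± β`, `α` and `3α`,
where `α = √2 g / a` and `β = 2√2 / a`. Over `[0, T]` their half-phases are `πg ± 2π`, `πg`
and `3πg`, and the mean of `cos (c θ + d)` is `sin u · cos (d + u) / u` for the half-phase
`u = cT/2`. Shifting by `2π` and writing `sin 3x · cos 3y` as `sin x · cos y` times a sum of
cosines exhibits the common factor `sin (πg) cos (αs + πg)`; the remaining coefficient identity
is rational in `g` once `a² = g² + 1`.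
-/

lemma mean_cos_mul_add {T c u : ℝ} (d : ℝ) (hT : T ≠ 0) (hu : c * T / 2 = u) (hu0 : u ≠ 0) :
    1 / T * ∫ θ in (0 : ℝ)..T, cos (c * θ + d) = sin u * cos (d + u) / u := by
  have hc : c ≠ 0 := by rintro rfl; simp [← hu] at hu0
  rw [intervalIntegral.integral_comp_mul_add cos hc d, integral_cos, mul_zero, zero_add,
    smul_eq_mul, sin_sub_sin, ← hu]
  field_simp
  ring_nf

lemma cos_mul_trig_eq_sum_cos (P Q A B C : ℝ) :
    cos P * (A * cos Q + B + C * cos (2 * P)) =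
      A / 2 * cos (P + Q) + A / 2 * cos (P - Q) + (B + C / 2) * cos P + C / 2 * cos (3 * P) := by
  rw [cos_add, cos_sub, cos_two_mul, cos_three_mul]
  ring

lemma sin_three_mul_mul_cos_three_mul (x d : ℝ) :
    sin (3 * x) * cos (3 * (d + x)) = sin x * cos (d + x) *
      (2 * (cos (2 * d) + cos (2 * (d + x)) + cos (2 * (d + 2 * x)) - cos (2 * x)) - 1) := by
  have hsum : cos (2 * d) + cos (2 * (d + 2 * x)) = 2 * cos (2 * x) * cos (2 * (d + x)) := by
    rw [cos_add_cos, show (2 * d + 2 * (d + 2 * x)) / 2 = 2 * (d + x) by ring,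
      show (2 * d - 2 * (d + 2 * x)) / 2 = -(2 * x) by ring, cos_neg]
    ring
  rw [sin_three_mul, cos_three_mul, add_right_comm _ (cos (2 * (d + x))), hsum,
    cos_two_mul x, cos_two_mul (d + x), cos_sq' x]
  ring

lemma mean_cos_mul_trig {T α β u v : ℝ} (d A B C : ℝ) (hT : T ≠ 0) (hu : α * T / 2 = u)
    (hv : β * T / 2 = v) (hu0 : u ≠ 0) (huv : u + v ≠ 0) (huv_sub : u - v ≠ 0) :
    1 / T * ∫ θ in (0 : ℝ)..T,
        cos (α * θ + d) * (A * cos (β * θ) + B + C * cos (2 * (α * θ + d))) =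
      A / 2 * (sin (u + v) * cos (d + (u + v)) / (u + v)) +
        A / 2 * (sin (u - v) * cos (d + (u - v)) / (u - v)) +
        (B + C / 2) * (sin u * cos (d + u) / u) +
        C / 2 * (sin (3 * u) * cos (3 * (d + u)) / (3 * u)) := by
  have hint : ∀ k c e : ℝ,
      IntervalIntegrable (fun θ => k * cos (c * θ + e)) MeasureTheory.volume 0 T :=
    fun _ _ _ => Continuous.intervalIntegrable (by fun_prop) _ _
  have hexpand : ∀ θ, cos (α * θ + d) * (A * cos (β * θ) + B + C * cos (2 * (α * θ + d))) =
      A / 2 * cos ((α + β) * θ + d) + A / 2 * cos ((α - β) * θ + d) +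
        (B + C / 2) * cos (α * θ + d) + C / 2 * cos ((3 * α) * θ + 3 * d) := by
    intro θ
    rw [cos_mul_trig_eq_sum_cos]
    ring_nf
  simp only [hexpand]
  rw [intervalIntegral.integral_add (((hint _ _ _).add (hint _ _ _)).add (hint _ _ _)) (hint _ _ _),
    intervalIntegral.integral_add ((hint _ _ _).add (hint _ _ _)) (hint _ _ _),
    intervalIntegral.integral_add (hint _ _ _) (hint _ _ _)]
  simp only [intervalIntegral.integral_const_mul, mul_add, mul_left_comm (1 / T)]
  rw [mean_cos_mul_add d hT (by rw [← hu, ← hv]; ring) huv,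
    mean_cos_mul_add d hT (by rw [← hu, ← hv]; ring) huv_sub,
    mean_cos_mul_add d hT hu hu0,
    mean_cos_mul_add (3 * d) hT (by rw [← hu]; ring) (mul_ne_zero three_ne_zero hu0)]

lemma mean_cos_mul_trig_of_eq_two_pi {T α β u : ℝ} (d A B C : ℝ) (hT : T ≠ 0)
    (hu : α * T / 2 = u) (hv : β * T / 2 = 2 * π) (hu0 : u ≠ 0) (huv : u + 2 * π ≠ 0)
    (huv_sub : u - 2 * π ≠ 0) :
    1 / T * ∫ θ in (0 : ℝ)..T,
        cos (α * θ + d) * (A * cos (β * θ) + B + C * cos (2 * (α * θ + d))) =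
      sin u * cos (d + u) * (A / 2 * (1 / (u + 2 * π) + 1 / (u - 2 * π)) + (B + C / 2) / u +
        C / 2 * (2 * (cos (2 * d) + cos (2 * (d + u)) + cos (2 * (d + 2 * u)) - cos (2 * u)) - 1) /
          (3 * u)) := by
  rw [mean_cos_mul_trig d A B C hT hu hv hu0 huv huv_sub, ← add_assoc, ← add_sub_assoc,
    sin_add_two_pi, sin_sub_two_pi, cos_add_two_pi, cos_sub_two_pi,
    sin_three_mul_mul_cos_three_mul]
  ring

lemma f2_amplitude_eq {a g h ρ : ℝ} (S : ℝ) (hg2 : g ^ 2 = a ^ 2 - 1) (hg0 : 0 < g)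
    (hg_sub_two : g - 2 ≠ 0) (hρ : ρ ≠ 0) :
    1 / (4 * a ^ 2 * g * ρ) *
        ((a ^ 2 - 3) * (a ^ 2 * (h - 3 * ρ ^ 2) + 3 * ρ ^ 2) / 2 *
            (1 / (π * g + 2 * π) + 1 / (π * g - 2 * π)) +
          ((a ^ 2 - 3) * a ^ 2 * h - 3 * (a ^ 4 - 4 * a ^ 2 + 2) * ρ ^ 2 + 3 * ρ ^ 2 / 2) /
            (π * g) +
          3 * ρ ^ 2 / 2 * (2 * S - 1) / (3 * (π * g))) =
      (2 * a ^ 2 * (a ^ 2 - 3) ^ 2 * h + (a ^ 2 - 5) * ρ ^ 2 * S +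
          2 * (-3 * a ^ 6 + 21 * a ^ 4 - 43 * a ^ 2 + 17) * ρ ^ 2) /
        (4 * π * a ^ 2 * (a ^ 2 - 5) * (a ^ 2 - 1) * ρ) := by
  have ha2 : a ^ 2 = g ^ 2 + 1 := by linarith
  have ha0 : a ≠ 0 := by rintro rfl; nlinarith
  have hπ : π ≠ 0 := pi_ne_zero
  have huv_sub : π * g - 2 * π ≠ 0 := by
    rw [show π * g - 2 * π = π * (g - 2) by ring]; exact mul_ne_zero hπ hg_sub_two
  have ha5 : a ^ 2 - 5 ≠ 0 := by
    rw [ha2, show g ^ 2 + 1 - 5 = (g - 2) * (g + 2) by ring]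
    exact mul_ne_zero hg_sub_two (by positivity)
  have ha1 : a ^ 2 - 1 ≠ 0 := by rw [← hg2]; positivity
  field_simp
  rw [ha2]
  ring

/-- closed form of the second averaged function `f₂(ρ,s)` for `a > 1`,
`a² ≠ 5`, where `g = √(a²−1)` and `T = √2·a·π`, valid for `ρ ≠ 0`. -/
theorem averaged_function_f2_closed_form (a h : ℝ) (ha : 1 < a) (ha5 : a ^ 2 ≠ 5)
    (g T : ℝ) (hg : g = Real.sqrt (a ^ 2 - 1)) (hT : T = Real.sqrt 2 * a * π)
    (F12 : ℝ → ℝ → ℝ → ℝ)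
    (hF12 : ∀ θ ρ s : ℝ, F12 θ ρ s =
      (1 / (4 * a ^ 2 * g * ρ)) * Real.cos (Real.sqrt 2 * g * (θ + s) / a) *
        ((a ^ 2 - 3) * (a ^ 2 * (h - 3 * ρ ^ 2) + 3 * ρ ^ 2) * Real.cos (2 * Real.sqrt 2 * θ / a) +
         (a ^ 2 - 3) * a ^ 2 * h - 3 * (a ^ 4 - 4 * a ^ 2 + 2) * ρ ^ 2 +
         3 * ρ ^ 2 * Real.cos (2 * Real.sqrt 2 * g * (θ + s) / a))) :
    ∀ ρ s : ℝ, ρ ≠ 0 →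
      (1 / T) * (∫ θ in (0 : ℝ)..T, F12 θ ρ s) =
        (Real.sin (π * g) * Real.cos (g * (π * a + Real.sqrt 2 * s) / a) /
          (4 * π * a ^ 2 * (a ^ 2 - 5) * (a ^ 2 - 1) * ρ)) *
        (2 * a ^ 2 * (a ^ 2 - 3) ^ 2 * h +
         (a ^ 2 - 5) * ρ ^ 2 *
           (Real.cos (2 * Real.sqrt 2 * g * s / a) +
            Real.cos (2 * g * (π * a + Real.sqrt 2 * s) / a) +
            Real.cos (2 * g * (2 * π * a + Real.sqrt 2 * s) / a) -
            Real.cos (2 * π * g)) +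
         2 * (-3 * a ^ 6 + 21 * a ^ 4 - 43 * a ^ 2 + 17) * ρ ^ 2) := by
  intro ρ s hρ
  have ha0 : a ≠ 0 := by positivity
  have hg2 : g ^ 2 = a ^ 2 - 1 := by rw [hg, sq_sqrt (by nlinarith)]
  have hg0 : 0 < g := by rw [hg]; exact sqrt_pos.mpr (by nlinarith)
  have hg_sub_two : g - 2 ≠ 0 := sub_ne_zero.mpr fun h2 => ha5 (by rw [h2] at hg2; linarith)
  have hαT : √2 * g / a * T / 2 = π * g := by rw [hT]; field_simp; exact sq_sqrt zero_le_two
  have hβT : 2 * √2 / a * T / 2 = 2 * π := by rw [hT]; field_simp; exact sq_sqrt zero_le_two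
  set d := √2 * g / a * s with hd
  have hF : ∀ θ, F12 θ ρ s = 1 / (4 * a ^ 2 * g * ρ) *
      (cos (√2 * g / a * θ + d) *
        ((a ^ 2 - 3) * (a ^ 2 * (h - 3 * ρ ^ 2) + 3 * ρ ^ 2) * cos (2 * √2 / a * θ) +
          ((a ^ 2 - 3) * a ^ 2 * h - 3 * (a ^ 4 - 4 * a ^ 2 + 2) * ρ ^ 2) +
          3 * ρ ^ 2 * cos (2 * (√2 * g / a * θ + d)))) := fun θ => by rw [hF12, hd]; ring_nf
  rw [intervalIntegral.integral_congr (fun θ _ => hF θ), intervalIntegral.integral_const_mul,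
    mul_left_comm, mean_cos_mul_trig_of_eq_two_pi _ _ _ _ (by rw [hT]; positivity) hαT hβT
      (by positivity) (by positivity)
      (by rw [show π * g - 2 * π = π * (g - 2) by ring]
          exact mul_ne_zero pi_ne_zero hg_sub_two),
    show g * (π * a + √2 * s) / a = d + π * g by rw [hd]; field_simp; ring,
    show 2 * √2 * g * s / a = 2 * d by ring,
    show 2 * g * (π * a + √2 * s) / a = 2 * (d + π * g) by rw [hd]; field_simp; ring,
    show 2 * g * (2 * π * a + √2 * s) / a = 2 * (d + 2 * (π * g)) by rw [hd]; field_simp; ring,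
    show 2 * π * g = 2 * (π * g) by ring]
  linear_combination sin (π * g) * cos (d + π * g) * f2_amplitude_eq
    (cos (2 * d) + cos (2 * (d + π * g)) + cos (2 * (d + 2 * (π * g))) - cos (2 * (π * g)))
    (h := h) hg2 hg0 hg_sub_two hρ
end

section
/- Let a = √5 (so g = √(a²−1) = 2 and T = √2·a·π = √10·π) and let h ∈ ℝ. Then for all ρ ≠ 0 and all s ∈ ℝ: (1/T)·∫₀ᵀ F11(θ,ρ,s) dθ = (5h − 4ρ²)·sin(2√(2/5)·s)/(10√10), and (1/T)·∫₀ᵀ F12(θ,ρ,s) dθ = (5h − 12ρ²)·cos(2√(2/5)·s)/(40ρ), where F11(θ,ρ,s) = (1/(√2·a³))·sin(√2 g(θ+s)/a)·((a²−3)(a²(h−ρ²)+ρ²)·cos²(√2 θ/a) + 3ρ²·cos²(√2 g(θ+s)/a)) and F12(θ,ρ,s) = (1/(4a²gρ))·cos(√2 g(θ+s)/a)·((a²−3)(a²(h−3ρ²)+3ρ²)·cos(2√2 θ/a) + (a²−3)a²h − 3(a⁴−4a²+2)ρ² + 3ρ²·cos(2√2 g(θ+s)/a)). -/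
open Real MeasureTheory

lemma pts' (p q : ℝ) : Real.sin p * Real.cos q = (Real.sin (p+q) + Real.sin (p-q))/2 := by
  rw [Real.sin_add, Real.sin_sub]; ring

lemma ptc' (p q : ℝ) : Real.cos p * Real.cos q = (Real.cos (p+q) + Real.cos (p-q))/2 := by
  rw [Real.cos_add, Real.cos_sub]; ring

lemma L1' (x y : ℝ) : Real.sin (2*x+2*y) * Real.cos x ^ 2
    = (1/2)*Real.sin (2*x+2*y) + (1/4)*Real.sin (4*x+2*y) + (1/4)*Real.sin (2*y) := by
  have h := pts' (2*x+2*y) (2*x)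
  rw [show 2*x+2*y+2*x = 4*x+2*y by ring, show 2*x+2*y-2*x = 2*y by ring] at h
  rw [Real.cos_sq]
  linear_combination (1/2) * h

lemma L2' (x y : ℝ) : Real.sin (2*x+2*y) * Real.cos (2*x+2*y) ^ 2
    = (1/4)*Real.sin (2*x+2*y) + (1/4)*Real.sin (6*x+6*y) := by
  have h := pts' (2*x+2*y) (2*(2*x+2*y))
  rw [show 2*x+2*y+2*(2*x+2*y) = 6*x+6*y by ring,
      show 2*x+2*y-2*(2*x+2*y) = -(2*x+2*y) by ring, Real.sin_neg] at h
  rw [Real.cos_sq]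
  linear_combination (1/2) * h

lemma L3' (x y : ℝ) : Real.cos (2*x+2*y) * Real.cos (2*x)
    = (1/2)*Real.cos (4*x+2*y) + (1/2)*Real.cos (2*y) := by
  have h := ptc' (2*x+2*y) (2*x)
  rw [show 2*x+2*y+2*x = 4*x+2*y by ring, show 2*x+2*y-2*x = 2*y by ring] at h
  linear_combination h

lemma L4' (x y : ℝ) : Real.cos (2*x+2*y) * Real.cos (2*(2*x+2*y))
    = (1/2)*Real.cos (6*x+6*y) + (1/2)*Real.cos (2*x+2*y) := by
  have h := ptc' (2*x+2*y) (2*(2*x+2*y))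
  rw [show 2*x+2*y+2*(2*x+2*y) = 6*x+6*y by ring,
      show 2*x+2*y-2*(2*x+2*y) = -(2*x+2*y) by ring, Real.cos_neg] at h
  linear_combination h

lemma int_sin_lin {k : ℝ} (hk : k ≠ 0) (φ T : ℝ) :
    ∫ θ in (0:ℝ)..T, Real.sin (k*θ + φ) = (Real.cos φ - Real.cos (k*T + φ))/k := by
  rw [intervalIntegral.integral_comp_mul_add Real.sin hk φ, integral_sin, smul_eq_mul,
    mul_zero, zero_add]
  field_simp

lemma int_cos_lin {k : ℝ} (hk : k ≠ 0) (φ T : ℝ) :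
    ∫ θ in (0:ℝ)..T, Real.cos (k*θ + φ) = (Real.sin (k*T + φ) - Real.sin φ)/k := by
  rw [intervalIntegral.integral_comp_mul_add Real.cos hk φ, integral_cos, smul_eq_mul,
    mul_zero, zero_add]
  field_simp

open Real in
/-- in the resonant case `a = √5` (so `g = 2`, `T = √10·π`), the two
averaged functions take the simple closed forms
`f₁(ρ,s) = (5h − 4ρ²)·sin(2√(2/5)s)/(10√10)` and
`f₂(ρ,s) = (5h − 12ρ²)·cos(2√(2/5)s)/(40ρ)`. -/
theorem averaged_functions_a_sqrt5 (a h g T : ℝ)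
    (ha : a = Real.sqrt 5) (hg : g = Real.sqrt (a ^ 2 - 1))
    (hT : T = Real.sqrt 2 * a * π)
    (F11 F12 : ℝ → ℝ → ℝ → ℝ)
    (hF11 : ∀ θ ρ s : ℝ, F11 θ ρ s =
      (1 / (Real.sqrt 2 * a ^ 3)) * Real.sin (Real.sqrt 2 * g * (θ + s) / a) *
        ((a ^ 2 - 3) * (a ^ 2 * (h - ρ ^ 2) + ρ ^ 2) * Real.cos (Real.sqrt 2 * θ / a) ^ 2 +
         3 * ρ ^ 2 * Real.cos (Real.sqrt 2 * g * (θ + s) / a) ^ 2))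
    (hF12 : ∀ θ ρ s : ℝ, F12 θ ρ s =
      (1 / (4 * a ^ 2 * g * ρ)) * Real.cos (Real.sqrt 2 * g * (θ + s) / a) *
        ((a ^ 2 - 3) * (a ^ 2 * (h - 3 * ρ ^ 2) + 3 * ρ ^ 2) * Real.cos (2 * Real.sqrt 2 * θ / a) +
         (a ^ 2 - 3) * a ^ 2 * h - 3 * (a ^ 4 - 4 * a ^ 2 + 2) * ρ ^ 2 +
         3 * ρ ^ 2 * Real.cos (2 * Real.sqrt 2 * g * (θ + s) / a))) :
    ∀ ρ s : ℝ, ρ ≠ 0 →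
      (1 / T) * (∫ θ in (0 : ℝ)..T, F11 θ ρ s) =
        (5 * h - 4 * ρ ^ 2) * Real.sin (2 * Real.sqrt (2 / 5) * s) / (10 * Real.sqrt 10) ∧
      (1 / T) * (∫ θ in (0 : ℝ)..T, F12 θ ρ s) =
        (5 * h - 12 * ρ ^ 2) * Real.cos (2 * Real.sqrt (2 / 5) * s) / (40 * ρ) := by
  intro ρ s hρ
  set c : ℝ := Real.sqrt (2/5) with hc
  have ha_pos : 0 < a := by rw [ha]; positivity
  have ha2 : a ^ 2 = 5 := by rw [ha]; exact Real.sq_sqrt (by norm_num)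
  have ha4 : a ^ 4 = 25 := by linear_combination (a^2 + 5) * ha2
  have hg2 : g = 2 := by
    rw [hg, ha2, show (5:ℝ)-1 = 4 by norm_num, show (4:ℝ) = 2^2 by norm_num,
      Real.sqrt_sq (by norm_num)]
  have hc_pos : 0 < c := by rw [hc]; positivity
  have hc2 : c ^ 2 = 2/5 := Real.sq_sqrt (by norm_num)
  have hs2a : Real.sqrt 2 = c * a := by
    rw [hc, ha, ← Real.sqrt_mul (by norm_num : (0:ℝ) ≤ 2/5)]
    norm_num
  have hK1 : Real.sqrt 2 * a ^ 3 = 5 * Real.sqrt 10 := by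
    rw [ha, show (Real.sqrt 5)^3 = 5 * Real.sqrt 5 from by
        rw [pow_succ, Real.sq_sqrt (by norm_num : (0:ℝ) ≤ 5)],
      show Real.sqrt 2 * (5 * Real.sqrt 5) = 5 * (Real.sqrt 2 * Real.sqrt 5) by ring,
      ← Real.sqrt_mul (by norm_num : (0:ℝ) ≤ 2)]
    norm_num
  have h10 : Real.sqrt 10 ≠ 0 := by positivity
  have hTpos : 0 < T := by rw [hT]; positivity
  have hTne : T ≠ 0 := ne_of_gt hTpos
  have hcT : c * T = 2 * π := by
    rw [hT, hs2a]
    linear_combination (a^2*π) * hc2 + (2/5*π) * ha2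
  have hane : a ≠ 0 := ne_of_gt ha_pos
  have hargS : ∀ t u : ℝ, Real.sqrt 2 * g * (t + u) / a = 2*c*t + 2*c*u := by
    intro t u; rw [hg2, hs2a]; field_simp
  have hargQ : ∀ t : ℝ, Real.sqrt 2 * t / a = c*t := by
    intro t; rw [hs2a]; field_simp
  have hargD : ∀ t : ℝ, 2 * Real.sqrt 2 * t / a = 2*c*t := by
    intro t; rw [hs2a]; field_simp
  have hargS2 : ∀ t u : ℝ, 2 * Real.sqrt 2 * g * (t + u) / a = 2*(2*c*t + 2*c*u) := by
    intro t u; rw [hg2, hs2a]; field_simp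
  -- coefficients
  set K : ℝ := 1/(5*Real.sqrt 10) with hK
  set A : ℝ := 5*h - 4*ρ^2 with hA
  set B : ℝ := 5*h - 12*ρ^2 with hB
  set M : ℝ := 1/(40*ρ) with hM
  -- periodicity facts
  have per2c : Real.cos (2*c*T + 2*c*s) = Real.cos (2*c*s) := by
    rw [show 2*c*T + 2*c*s = 2*c*s + (2:ℤ)*(2*π) by push_cast; linarith]
    exact Real.cos_add_int_mul_two_pi _ 2
  have per4c : Real.cos (4*c*T + 2*c*s) = Real.cos (2*c*s) := by
    rw [show 4*c*T + 2*c*s = 2*c*s + (4:ℤ)*(2*π) by push_cast; linarith]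
    exact Real.cos_add_int_mul_two_pi _ 4
  have per6c : Real.cos (6*c*T + 6*c*s) = Real.cos (6*c*s) := by
    rw [show 6*c*T + 6*c*s = 6*c*s + (6:ℤ)*(2*π) by push_cast; linarith]
    exact Real.cos_add_int_mul_two_pi _ 6
  have per2s : Real.sin (2*c*T + 2*c*s) = Real.sin (2*c*s) := by
    rw [show 2*c*T + 2*c*s = 2*c*s + (2:ℤ)*(2*π) by push_cast; linarith]
    exact Real.sin_add_int_mul_two_pi _ 2
  have per4s : Real.sin (4*c*T + 2*c*s) = Real.sin (2*c*s) := by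
    rw [show 4*c*T + 2*c*s = 2*c*s + (4:ℤ)*(2*π) by push_cast; linarith]
    exact Real.sin_add_int_mul_two_pi _ 4
  have per6s : Real.sin (6*c*T + 6*c*s) = Real.sin (6*c*s) := by
    rw [show 6*c*T + 6*c*s = 6*c*s + (6:ℤ)*(2*π) by push_cast; linarith]
    exact Real.sin_add_int_mul_two_pi _ 6
  have h2c : (2*c : ℝ) ≠ 0 := by positivity
  have h4c : (4*c : ℝ) ≠ 0 := by positivity
  have h6c : (6*c : ℝ) ≠ 0 := by positivity
  constructor
  · -- F11
    have key1 : ∀ θ : ℝ, F11 θ ρ s =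
        K*(A + 3*ρ^2/4) * Real.sin (2*c*θ + 2*c*s)
        + K*(A/2) * Real.sin (4*c*θ + 2*c*s)
        + K*(3*ρ^2/4) * Real.sin (6*c*θ + 6*c*s)
        + K*(A/2) * Real.sin (2*c*s) := by
      intro θ
      rw [hF11, hargS θ s, hargQ θ, ha2, hK1]
      have e1 := L1' (c*θ) (c*s)
      rw [show 2*(c*θ)+2*(c*s) = 2*c*θ+2*c*s by ring,
          show 4*(c*θ)+2*(c*s) = 4*c*θ+2*c*s by ring,
          show 2*(c*s) = 2*c*s by ring] at e1
      have e2 := L2' (c*θ) (c*s)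
      rw [show 2*(c*θ)+2*(c*s) = 2*c*θ+2*c*s by ring,
          show 6*(c*θ)+6*(c*s) = 6*c*θ+6*c*s by ring] at e2
      rw [hK, hA]
      linear_combination (1/(5*Real.sqrt 10)) * (5-3)*(5*(h-ρ^2)+ρ^2) * e1
        + (1/(5*Real.sqrt 10)) * 3*ρ^2 * e2
    have i1 : IntervalIntegrable (fun θ => K*(A + 3*ρ^2/4) * Real.sin (2*c*θ + 2*c*s))
        volume 0 T := by apply Continuous.intervalIntegrable; fun_prop
    have i2 : IntervalIntegrable (fun θ => K*(A/2) * Real.sin (4*c*θ + 2*c*s))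
        volume 0 T := by apply Continuous.intervalIntegrable; fun_prop
    have i3 : IntervalIntegrable (fun θ => K*(3*ρ^2/4) * Real.sin (6*c*θ + 6*c*s))
        volume 0 T := by apply Continuous.intervalIntegrable; fun_prop
    have i4 : IntervalIntegrable (fun _ : ℝ => K*(A/2) * Real.sin (2*c*s))
        volume 0 T := intervalIntegrable_const
    have hI : (∫ θ in (0:ℝ)..T, F11 θ ρ s) = T * (K*(A/2) * Real.sin (2*c*s)) := by
      rw [intervalIntegral.integral_congr (g := fun θ =>
        K*(A + 3*ρ^2/4) * Real.sin (2*c*θ + 2*c*s)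
        + K*(A/2) * Real.sin (4*c*θ + 2*c*s)
        + K*(3*ρ^2/4) * Real.sin (6*c*θ + 6*c*s)
        + K*(A/2) * Real.sin (2*c*s)) (fun θ _ => key1 θ)]
      rw [intervalIntegral.integral_add ((i1.add i2).add i3) i4,
          intervalIntegral.integral_add (i1.add i2) i3,
          intervalIntegral.integral_add i1 i2,
          intervalIntegral.integral_const_mul, intervalIntegral.integral_const_mul,
          intervalIntegral.integral_const_mul, int_sin_lin h2c, int_sin_lin h4c,
          int_sin_lin h6c, per2c, per4c, per6c, intervalIntegral.integral_const,
          smul_eq_mul]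
      ring
    rw [hI, show (1:ℝ)/T * (T*(K*(A/2)*Real.sin (2*c*s))) = K*(A/2)*Real.sin (2*c*s)
      from by field_simp, hK]
    ring
  · -- F12
    have key2 : ∀ θ : ℝ, F12 θ ρ s =
        M*(10*h - 21*ρ^2 + 3*ρ^2/2) * Real.cos (2*c*θ + 2*c*s)
        + M*B * Real.cos (4*c*θ + 2*c*s)
        + M*(3*ρ^2/2) * Real.cos (6*c*θ + 6*c*s)
        + M*B * Real.cos (2*c*s) := by
      intro θ
      rw [hF12, hargS θ s, hargD θ, hargS2 θ s, ha2, ha4, hg2]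
      have e3 := L3' (c*θ) (c*s)
      rw [show 2*(c*θ)+2*(c*s) = 2*c*θ+2*c*s by ring,
          show 4*(c*θ)+2*(c*s) = 4*c*θ+2*c*s by ring,
          show 2*(c*s) = 2*c*s by ring,
          show 2*(c*θ) = 2*c*θ by ring] at e3
      have e4 := L4' (c*θ) (c*s)
      rw [show 2*(c*θ)+2*(c*s) = 2*c*θ+2*c*s by ring,
          show 6*(c*θ)+6*(c*s) = 6*c*θ+6*c*s by ring] at e4
      rw [show (1:ℝ)/(4*5*2*ρ) = M from by rw [hM]; norm_num, hB]
      linear_combination M * (2*(5*(h-3*ρ^2)+3*ρ^2)) * e3 + M * (3*ρ^2) * e4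
    have i1 : IntervalIntegrable (fun θ => M*(10*h - 21*ρ^2 + 3*ρ^2/2) * Real.cos (2*c*θ + 2*c*s))
        volume 0 T := by apply Continuous.intervalIntegrable; fun_prop
    have i2 : IntervalIntegrable (fun θ => M*B * Real.cos (4*c*θ + 2*c*s))
        volume 0 T := by apply Continuous.intervalIntegrable; fun_prop
    have i3 : IntervalIntegrable (fun θ => M*(3*ρ^2/2) * Real.cos (6*c*θ + 6*c*s))
        volume 0 T := by apply Continuous.intervalIntegrable; fun_prop
    have i4 : IntervalIntegrable (fun _ : ℝ => M*B * Real.cos (2*c*s))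
        volume 0 T := intervalIntegrable_const
    have hI : (∫ θ in (0:ℝ)..T, F12 θ ρ s) = T * (M*B * Real.cos (2*c*s)) := by
      rw [intervalIntegral.integral_congr (g := fun θ =>
        M*(10*h - 21*ρ^2 + 3*ρ^2/2) * Real.cos (2*c*θ + 2*c*s)
        + M*B * Real.cos (4*c*θ + 2*c*s)
        + M*(3*ρ^2/2) * Real.cos (6*c*θ + 6*c*s)
        + M*B * Real.cos (2*c*s)) (fun θ _ => key2 θ)]
      rw [intervalIntegral.integral_add ((i1.add i2).add i3) i4,
          intervalIntegral.integral_add (i1.add i2) i3,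
          intervalIntegral.integral_add i1 i2,
          intervalIntegral.integral_const_mul, intervalIntegral.integral_const_mul,
          intervalIntegral.integral_const_mul, int_cos_lin h2c, int_cos_lin h4c,
          int_cos_lin h6c, per2s, per4s, per6s, intervalIntegral.integral_const,
          smul_eq_mul]
      ring
    rw [hI, show (1:ℝ)/T * (T*(M*B*Real.cos (2*c*s))) = M*B*Real.cos (2*c*s)
      from by field_simp, hM]
    ring
end

section
/- Let a > 1 with a² ≠ 3 and a² ≠ 5, let h > 0, set g = √(a²−1), and define f₁(ρ,s) = (sin(π g)·sin(g(πa + √2 s)/a) / (2√2·π·a³·(a²−5)·g)) · (2a²(a²−3)²h + (a²−5)ρ²·(cos(2√2 g s/a) + cos(2g(πa + √2 s)/a) + cos(2g(2πa + √2 s)/a) + cos(2πg)) − 2(a⁶−7a⁴+14a²−4)ρ²) and f₂(ρ,s) = (sin(π g)·cos(g(πa + √2 s)/a) / (4π·a²·(a²−5)·(a²−1)·ρ)) · (2a²(a²−3)²h + (a²−5)ρ²·(cos(2√2 g s/a) + cos(2g(πa + √2 s)/a) + cos(2g(2πa + √2 s)/a) − cos(2πg)) + 2(−3a⁶+21a⁴−43a²+17)ρ²).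 Set D = 6a⁶ − 42a⁴ + 85a² − (a²−5)·cos(2πg) − 29 and assume D > 0. Then for every integer n, the point (ρ̃, s̃) with s̃ = πa(n − g)/(√2·g) and ρ̃ = a·√(2(a²−3)²h / D) satisfies ρ̃ > 0, f₁(ρ̃, s̃) = 0 and f₂(ρ̃, s̃) = 0. -/
open Real in
/-- for `a > 1` with `a² ≠ 3`, `a² ≠ 5` and `h > 0`, the point
`(ρ̃, s̃)` with `s̃ = πa(n−g)/(√2 g)` (`n ∈ ℤ`) and `ρ̃ = a√(2(a²−3)²h/D)` is a positive
common zero of the averaged functions `f₁` and `f₂`. -/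
theorem zeros_of_averaged_functions (a h : ℝ) (ha : 1 < a)
    (ha3 : a ^ 2 ≠ 3) (ha5 : a ^ 2 ≠ 5) (hh : 0 < h)
    (g : ℝ) (hg : g = Real.sqrt (a ^ 2 - 1))
    (f₁ f₂ : ℝ → ℝ → ℝ)
    (hf₁ : ∀ ρ s : ℝ, f₁ ρ s =
      (Real.sin (π * g) * Real.sin (g * (π * a + Real.sqrt 2 * s) / a) /
        (2 * Real.sqrt 2 * π * a ^ 3 * (a ^ 2 - 5) * g)) *
      (2 * a ^ 2 * (a ^ 2 - 3) ^ 2 * h +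
       (a ^ 2 - 5) * ρ ^ 2 *
         (Real.cos (2 * Real.sqrt 2 * g * s / a) +
          Real.cos (2 * g * (π * a + Real.sqrt 2 * s) / a) +
          Real.cos (2 * g * (2 * π * a + Real.sqrt 2 * s) / a) +
          Real.cos (2 * π * g)) -
       2 * (a ^ 6 - 7 * a ^ 4 + 14 * a ^ 2 - 4) * ρ ^ 2))
    (hf₂ : ∀ ρ s : ℝ, f₂ ρ s =
      (Real.sin (π * g) * Real.cos (g * (π * a + Real.sqrt 2 * s) / a) /
        (4 * π * a ^ 2 * (a ^ 2 - 5) * (a ^ 2 - 1) * ρ)) *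
      (2 * a ^ 2 * (a ^ 2 - 3) ^ 2 * h +
       (a ^ 2 - 5) * ρ ^ 2 *
         (Real.cos (2 * Real.sqrt 2 * g * s / a) +
          Real.cos (2 * g * (π * a + Real.sqrt 2 * s) / a) +
          Real.cos (2 * g * (2 * π * a + Real.sqrt 2 * s) / a) -
          Real.cos (2 * π * g)) +
       2 * (-3 * a ^ 6 + 21 * a ^ 4 - 43 * a ^ 2 + 17) * ρ ^ 2))
    (D : ℝ)
    (hD : D = 6 * a ^ 6 - 42 * a ^ 4 + 85 * a ^ 2 - (a ^ 2 - 5) * Real.cos (2 * π * g) - 29)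
    (hDpos : 0 < D)
    (n : ℤ) (st ρt : ℝ)
    (hst : st = π * a * ((n : ℝ) - g) / (Real.sqrt 2 * g))
    (hρt : ρt = a * Real.sqrt (2 * (a ^ 2 - 3) ^ 2 * h / D)) :
    0 < ρt ∧ f₁ ρt st = 0 ∧ f₂ ρt st = 0 := by

  have ha0 : 0 < a := lt_trans one_pos ha
  have hane : a ≠ 0 := ne_of_gt ha0
  have hg1 : 0 < a ^ 2 - 1 := by nlinarith
  have hgpos : 0 < g := by rw [hg]; exact Real.sqrt_pos.mpr hg1
  have hgne : g ≠ 0 := ne_of_gt hgpos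
  have h2pos : (0:ℝ) < Real.sqrt 2 := Real.sqrt_pos.mpr two_pos
  have h2ne : Real.sqrt 2 ≠ 0 := ne_of_gt h2pos
  have h2sq : Real.sqrt 2 * Real.sqrt 2 = 2 := Real.mul_self_sqrt (by norm_num)
  have hK : 0 < (a ^ 2 - 3) ^ 2 := by
    have : a ^ 2 - 3 ≠ 0 := sub_ne_zero.mpr ha3
    positivity
  have hargpos : 0 < 2 * (a ^ 2 - 3) ^ 2 * h / D := by positivity
  have hρpos : 0 < ρt := by
    rw [hρt]; exact mul_pos ha0 (Real.sqrt_pos.mpr hargpos)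
  have hρsq : ρt ^ 2 = a ^ 2 * (2 * (a ^ 2 - 3) ^ 2 * h / D) := by
    rw [hρt, mul_pow, Real.sq_sqrt (le_of_lt hargpos)]
  have hρD : ρt ^ 2 * D = 2 * a ^ 2 * (a ^ 2 - 3) ^ 2 * h := by
    rw [hρsq]; field_simp
  have hρD2 : ρt ^ 2 * (6 * a ^ 6 - 42 * a ^ 4 + 85 * a ^ 2 -
      (a ^ 2 - 5) * Real.cos (2 * π * g) - 29) = 2 * a ^ 2 * (a ^ 2 - 3) ^ 2 * h := by
    rw [← hD]; exact hρD
  have hang : g * (π * a + Real.sqrt 2 * st) / a = (n : ℝ) * π := by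
    rw [hst]; field_simp; ring
  have hA1 : 2 * Real.sqrt 2 * g * st / a = -(2 * π * g) + (n : ℝ) * (2 * π) := by
    rw [hst]; field_simp; ring_nf
  have hA2 : 2 * g * (π * a + Real.sqrt 2 * st) / a = 0 + (n : ℝ) * (2 * π) := by
    rw [hst]; field_simp; ring
  have hA3 : 2 * g * (2 * π * a + Real.sqrt 2 * st) / a = 2 * π * g + (n : ℝ) * (2 * π) := by
    rw [hst]; field_simp; ring
  refine ⟨hρpos, ?_, ?_⟩
  · rw [hf₁, hang]
    have : Real.sin ((n : ℝ) * π) = 0 := Real.sin_int_mul_pi n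
    rw [this]
    simp
  · rw [hf₂, hA1, hA2, hA3, hang]
    have c1 : Real.cos (-(2 * π * g) + (n : ℝ) * (2 * π)) = Real.cos (2 * π * g) := by
      rw [Real.cos_add_int_mul_two_pi, Real.cos_neg]
    have c2 : Real.cos (0 + (n : ℝ) * (2 * π)) = 1 := by
      rw [Real.cos_add_int_mul_two_pi, Real.cos_zero]
    have c3 : Real.cos (2 * π * g + (n : ℝ) * (2 * π)) = Real.cos (2 * π * g) := by
      rw [Real.cos_add_int_mul_two_pi]
    rw [c1, c2, c3]
    linear_combination (-(Real.sin (π * g) * Real.cos ((n:ℝ) * π) /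
      (4 * π * a ^ 2 * (a ^ 2 - 5) * (a ^ 2 - 1) * ρt))) * hρD2
end

section
/- Let N be a positive integer with N ≠ 2 and let a = √(N²+1) (so g = √(a²−1) = N), let h ∈ ℝ, and set T = √2·a·π. Then both averaged functions vanish identically: for all ρ ≠ 0 and all s ∈ ℝ, ∫₀ᵀ F11(θ,ρ,s) dθ = 0 and ∫₀ᵀ F12(θ,ρ,s) dθ = 0, where F11(θ,ρ,s) = (1/(√2·a³))·sin(√2 g(θ+s)/a)·((a²−3)(a²(h−ρ²)+ρ²)·cos²(√2 θ/a) + 3ρ²·cos²(√2 g(θ+s)/a)) and F12(θ,ρ,s) = (1/(4a²gρ))·cos(√2 g(θ+s)/a)·((a²−3)(a²(h−3ρ²)+3ρ²)·cos(2√2 θ/a) + (a²−3)a²h − 3(a⁴−4a²+2)ρ² + 3ρ²·cos(2√2 g(θ+s)/a)). -/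
open intervalIntegral in
lemma Isin_zero (T b c : ℝ) (m : ℤ) (hb : b ≠ 0) (hbT : b * T = m * (2 * Real.pi)) :
    ∫ θ in (0:ℝ)..T, Real.sin (b * θ + c) = 0 := by
  rw [integral_comp_mul_add Real.sin hb c, integral_sin]
  have h1 : b * T + c = c + m * (2 * Real.pi) := by rw [hbT]; ring
  rw [h1, Real.cos_add_int_mul_two_pi]
  simp

open intervalIntegral in
lemma Icos_zero (T b c : ℝ) (m : ℤ) (hb : b ≠ 0) (hbT : b * T = m * (2 * Real.pi)) :
    ∫ θ in (0:ℝ)..T, Real.cos (b * θ + c) = 0 := by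
  rw [integral_comp_mul_add Real.cos hb c, integral_cos]
  have h1 : b * T + c = c + m * (2 * Real.pi) := by rw [hbT]; ring
  rw [h1, Real.sin_add_int_mul_two_pi]
  simp

lemma int5 {T : ℝ} {f1 f2 f3 f4 f5 : ℝ → ℝ}
    (hc1 : Continuous f1) (hc2 : Continuous f2) (hc3 : Continuous f3)
    (hc4 : Continuous f4) (hc5 : Continuous f5)
    (hz1 : ∫ θ in (0:ℝ)..T, f1 θ = 0) (hz2 : ∫ θ in (0:ℝ)..T, f2 θ = 0)
    (hz3 : ∫ θ in (0:ℝ)..T, f3 θ = 0) (hz4 : ∫ θ in (0:ℝ)..T, f4 θ = 0)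
    (hz5 : ∫ θ in (0:ℝ)..T, f5 θ = 0) :
    (∫ θ in (0:ℝ)..T, (f1 θ + f2 θ + f3 θ + f4 θ + f5 θ)) = 0 := by
  have i1 : IntervalIntegrable f1 MeasureTheory.volume 0 T := hc1.intervalIntegrable 0 T
  have i2 : IntervalIntegrable f2 MeasureTheory.volume 0 T := hc2.intervalIntegrable 0 T
  have i3 : IntervalIntegrable f3 MeasureTheory.volume 0 T := hc3.intervalIntegrable 0 T
  have i4 : IntervalIntegrable f4 MeasureTheory.volume 0 T := hc4.intervalIntegrable 0 T
  have i5 : IntervalIntegrable f5 MeasureTheory.volume 0 T := hc5.intervalIntegrable 0 T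
  rw [intervalIntegral.integral_add (((i1.add i2).add i3).add i4) i5,
    intervalIntegral.integral_add ((i1.add i2).add i3) i4,
    intervalIntegral.integral_add (i1.add i2) i3,
    intervalIntegral.integral_add i1 i2, hz1, hz2, hz3, hz4, hz5]
  norm_num

lemma key11x (x u A B C : ℝ) :
    C * Real.sin x * (A * Real.cos u ^ 2 + B * Real.cos x ^ 2)
    = C*A/2 * Real.sin x + C*A/4 * Real.sin (x + 2*u) + C*A/4 * Real.sin (x - 2*u)
      + C*B/4 * Real.sin x + C*B/4 * Real.sin (3*x) := by
  have h1 := Real.sin_add x (2*u)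
  have h2 := Real.sin_sub x (2*u)
  have h3 := Real.sin_three_mul x
  have h4 := Real.sin_two_mul u
  have h5 := Real.cos_two_mul u
  have h6 := Real.sin_sq_add_cos_sq x
  rw [h1, h2, h3, h4, h5]
  linear_combination (C*B*Real.sin x) * h6

lemma key11 (ω θ φ A B C n : ℝ) :
    C * Real.sin (n*ω*θ + φ) * (A * Real.cos (ω*θ) ^ 2 + B * Real.cos (n*ω*θ + φ) ^ 2)
    = C*A/2 * Real.sin (n*ω*θ + φ) + C*A/4 * Real.sin ((n+2)*ω*θ + φ)
      + C*A/4 * Real.sin ((n-2)*ω*θ + φ) + C*B/4 * Real.sin (n*ω*θ + φ)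
      + C*B/4 * Real.sin (3*n*ω*θ + 3*φ) := by
  have e1 : (n+2)*ω*θ + φ = (n*ω*θ + φ) + 2*(ω*θ) := by ring
  have e2 : (n-2)*ω*θ + φ = (n*ω*θ + φ) - 2*(ω*θ) := by ring
  have e3 : 3*n*ω*θ + 3*φ = 3*(n*ω*θ + φ) := by ring
  rw [e1, e2, e3]
  exact key11x (n*ω*θ + φ) (ω*θ) A B C

lemma key12x (x u A B D C : ℝ) :
    C * Real.cos x * (A * Real.cos (2*u) + D + B * Real.cos (2*x))
    = C*A/2 * Real.cos (x + 2*u) + C*A/2 * Real.cos (x - 2*u)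
      + C*D * Real.cos x + C*B/2 * Real.cos (3*x) + C*B/2 * Real.cos x := by
  have h1 := Real.cos_add x (2*u)
  have h2 := Real.cos_sub x (2*u)
  have h3 := Real.cos_three_mul x
  have h4 := Real.cos_two_mul x
  rw [h1, h2, h3, h4]
  ring

lemma key12 (ω θ φ A B D C n : ℝ) :
    C * Real.cos (n*ω*θ + φ) * (A * Real.cos (2*(ω*θ)) + D + B * Real.cos (2*(n*ω*θ + φ)))
    = C*A/2 * Real.cos ((n+2)*ω*θ + φ) + C*A/2 * Real.cos ((n-2)*ω*θ + φ)
      + C*D * Real.cos (n*ω*θ + φ) + C*B/2 * Real.cos (3*n*ω*θ + 3*φ)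
      + C*B/2 * Real.cos (n*ω*θ + φ) := by
  have e1 : (n+2)*ω*θ + φ = (n*ω*θ + φ) + 2*(ω*θ) := by ring
  have e2 : (n-2)*ω*θ + φ = (n*ω*θ + φ) - 2*(ω*θ) := by ring
  have e3 : 3*n*ω*θ + 3*φ = 3*(n*ω*θ + φ) := by ring
  rw [e1, e2, e3]
  exact key12x (n*ω*θ + φ) (ω*θ) A B D C

open Real in
/-- at the resonant values `a = √(N²+1)` with `N` a positive integer,
`N ≠ 2`, both averaged functions vanish identically. -/
theorem averaged_functions_vanish_at_resonance (N : ℕ) (hN : 0 < N) (hN2 : N ≠ 2)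
    (a : ℝ) (ha : a = Real.sqrt ((N : ℝ) ^ 2 + 1))
    (h g T : ℝ) (hg : g = Real.sqrt (a ^ 2 - 1)) (hT : T = Real.sqrt 2 * a * π)
    (F11 F12 : ℝ → ℝ → ℝ → ℝ)
    (hF11 : ∀ θ ρ s : ℝ, F11 θ ρ s =
      (1 / (Real.sqrt 2 * a ^ 3)) * Real.sin (Real.sqrt 2 * g * (θ + s) / a) *
        ((a ^ 2 - 3) * (a ^ 2 * (h - ρ ^ 2) + ρ ^ 2) * Real.cos (Real.sqrt 2 * θ / a) ^ 2 +
         3 * ρ ^ 2 * Real.cos (Real.sqrt 2 * g * (θ + s) / a) ^ 2))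
    (hF12 : ∀ θ ρ s : ℝ, F12 θ ρ s =
      (1 / (4 * a ^ 2 * g * ρ)) * Real.cos (Real.sqrt 2 * g * (θ + s) / a) *
        ((a ^ 2 - 3) * (a ^ 2 * (h - 3 * ρ ^ 2) + 3 * ρ ^ 2) * Real.cos (2 * Real.sqrt 2 * θ / a) +
         (a ^ 2 - 3) * a ^ 2 * h - 3 * (a ^ 4 - 4 * a ^ 2 + 2) * ρ ^ 2 +
         3 * ρ ^ 2 * Real.cos (2 * Real.sqrt 2 * g * (θ + s) / a))) :
    ∀ ρ s : ℝ, ρ ≠ 0 →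
      (∫ θ in (0 : ℝ)..T, F11 θ ρ s) = 0 ∧
      (∫ θ in (0 : ℝ)..T, F12 θ ρ s) = 0 := by
  have ha0 : 0 < a := by
    rw [ha]; positivity
  have ha2 : a ^ 2 = (N : ℝ) ^ 2 + 1 := by
    rw [ha, Real.sq_sqrt (by positivity)]
  have hg' : g = (N : ℝ) := by
    rw [hg, ha2]
    simp [Real.sqrt_sq (Nat.cast_nonneg N : (0:ℝ) ≤ N)]
  set ω : ℝ := Real.sqrt 2 / a with hωdef
  have hω0 : 0 < ω := by positivity
  have ha' : a ≠ 0 := ne_of_gt ha0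
  have hωT : ω * T = 2 * π := by
    rw [hT, hωdef, div_mul_eq_mul_div,
      show Real.sqrt 2 * (Real.sqrt 2 * a * π) = (Real.sqrt 2 * Real.sqrt 2) * (a * π) from by ring,
      Real.mul_self_sqrt (by norm_num : (0:ℝ) ≤ 2)]
    field_simp
  have hNpos : (0:ℝ) < (N : ℝ) := by exact_mod_cast hN
  have hN2' : (N : ℝ) ≠ 2 := by exact_mod_cast hN2
  -- frequency facts
  have bN : (N:ℝ) * ω ≠ 0 := by positivity
  have bN2p : ((N:ℝ) + 2) * ω ≠ 0 := by positivity
  have bN2m : ((N:ℝ) - 2) * ω ≠ 0 := by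
    apply mul_ne_zero (sub_ne_zero.2 hN2') (ne_of_gt hω0)
  have b3N : 3 * (N:ℝ) * ω ≠ 0 := by positivity
  have mN : (N:ℝ) * ω * T = ((N:ℤ):ℝ) * (2 * π) := by
    rw [mul_assoc, hωT]; push_cast; ring
  have mN2p : ((N:ℝ) + 2) * ω * T = (((N:ℤ)+2 : ℤ):ℝ) * (2 * π) := by
    rw [mul_assoc, hωT]; push_cast; ring
  have mN2m : ((N:ℝ) - 2) * ω * T = (((N:ℤ)-2 : ℤ):ℝ) * (2 * π) := by
    rw [mul_assoc, hωT]; push_cast; ring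
  have m3N : 3 * (N:ℝ) * ω * T = ((3*(N:ℤ) : ℤ):ℝ) * (2 * π) := by
    rw [mul_assoc, hωT]; push_cast; ring
  intro ρ s hρ
  have e1 : ∀ θ : ℝ, Real.sqrt 2 * g * (θ + s) / a = (N:ℝ)*ω*θ + (N:ℝ)*ω*s := by
    intro θ; rw [hg', hωdef]; ring
  have e2 : ∀ θ : ℝ, Real.sqrt 2 * θ / a = ω*θ := by
    intro θ; rw [hωdef]; ring
  have e3 : ∀ θ : ℝ, 2 * Real.sqrt 2 * θ / a = 2*(ω*θ) := by
    intro θ; rw [hωdef]; ring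
  have e4 : ∀ θ : ℝ, 2 * Real.sqrt 2 * g * (θ + s) / a = 2*((N:ℝ)*ω*θ + (N:ℝ)*ω*s) := by
    intro θ; rw [hg', hωdef]; ring
  constructor
  · have heq : ∀ θ : ℝ, F11 θ ρ s =
        (1 / (Real.sqrt 2 * a ^ 3))*((a ^ 2 - 3) * (a ^ 2 * (h - ρ ^ 2) + ρ ^ 2))/2
            * Real.sin ((N:ℝ)*ω*θ + (N:ℝ)*ω*s)
        + (1 / (Real.sqrt 2 * a ^ 3))*((a ^ 2 - 3) * (a ^ 2 * (h - ρ ^ 2) + ρ ^ 2))/4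
            * Real.sin (((N:ℝ)+2)*ω*θ + (N:ℝ)*ω*s)
        + (1 / (Real.sqrt 2 * a ^ 3))*((a ^ 2 - 3) * (a ^ 2 * (h - ρ ^ 2) + ρ ^ 2))/4
            * Real.sin (((N:ℝ)-2)*ω*θ + (N:ℝ)*ω*s)
        + (1 / (Real.sqrt 2 * a ^ 3))*(3 * ρ ^ 2)/4 * Real.sin ((N:ℝ)*ω*θ + (N:ℝ)*ω*s)
        + (1 / (Real.sqrt 2 * a ^ 3))*(3 * ρ ^ 2)/4
            * Real.sin (3*(N:ℝ)*ω*θ + 3*((N:ℝ)*ω*s)) := by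
      intro θ
      rw [hF11, e1 θ, e2 θ]
      linear_combination key11 ω θ ((N:ℝ)*ω*s) ((a ^ 2 - 3) * (a ^ 2 * (h - ρ ^ 2) + ρ ^ 2))
        (3 * ρ ^ 2) (1 / (Real.sqrt 2 * a ^ 3)) (N:ℝ)
    rw [intervalIntegral.integral_congr (g := fun θ =>
        (1 / (Real.sqrt 2 * a ^ 3))*((a ^ 2 - 3) * (a ^ 2 * (h - ρ ^ 2) + ρ ^ 2))/2
            * Real.sin ((N:ℝ)*ω*θ + (N:ℝ)*ω*s)
        + (1 / (Real.sqrt 2 * a ^ 3))*((a ^ 2 - 3) * (a ^ 2 * (h - ρ ^ 2) + ρ ^ 2))/4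
            * Real.sin (((N:ℝ)+2)*ω*θ + (N:ℝ)*ω*s)
        + (1 / (Real.sqrt 2 * a ^ 3))*((a ^ 2 - 3) * (a ^ 2 * (h - ρ ^ 2) + ρ ^ 2))/4
            * Real.sin (((N:ℝ)-2)*ω*θ + (N:ℝ)*ω*s)
        + (1 / (Real.sqrt 2 * a ^ 3))*(3 * ρ ^ 2)/4 * Real.sin ((N:ℝ)*ω*θ + (N:ℝ)*ω*s)
        + (1 / (Real.sqrt 2 * a ^ 3))*(3 * ρ ^ 2)/4
            * Real.sin (3*(N:ℝ)*ω*θ + 3*((N:ℝ)*ω*s))) (fun θ _ => heq θ)]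
    exact int5 (by fun_prop) (by fun_prop) (by fun_prop) (by fun_prop) (by fun_prop)
      (by rw [intervalIntegral.integral_const_mul, Isin_zero T _ _ (N:ℤ) bN mN, mul_zero])
      (by rw [intervalIntegral.integral_const_mul, Isin_zero T _ _ ((N:ℤ)+2) bN2p mN2p, mul_zero])
      (by rw [intervalIntegral.integral_const_mul, Isin_zero T _ _ ((N:ℤ)-2) bN2m mN2m, mul_zero])
      (by rw [intervalIntegral.integral_const_mul, Isin_zero T _ _ (N:ℤ) bN mN, mul_zero])
      (by rw [intervalIntegral.integral_const_mul, Isin_zero T _ _ (3*(N:ℤ)) b3N m3N, mul_zero])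
  · have heq : ∀ θ : ℝ, F12 θ ρ s =
        (1 / (4 * a ^ 2 * g * ρ))*((a ^ 2 - 3) * (a ^ 2 * (h - 3 * ρ ^ 2) + 3 * ρ ^ 2))/2
            * Real.cos (((N:ℝ)+2)*ω*θ + (N:ℝ)*ω*s)
        + (1 / (4 * a ^ 2 * g * ρ))*((a ^ 2 - 3) * (a ^ 2 * (h - 3 * ρ ^ 2) + 3 * ρ ^ 2))/2
            * Real.cos (((N:ℝ)-2)*ω*θ + (N:ℝ)*ω*s)
        + (1 / (4 * a ^ 2 * g * ρ))*((a ^ 2 - 3) * a ^ 2 * h - 3 * (a ^ 4 - 4 * a ^ 2 + 2) * ρ ^ 2)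
            * Real.cos ((N:ℝ)*ω*θ + (N:ℝ)*ω*s)
        + (1 / (4 * a ^ 2 * g * ρ))*(3 * ρ ^ 2)/2 * Real.cos (3*(N:ℝ)*ω*θ + 3*((N:ℝ)*ω*s))
        + (1 / (4 * a ^ 2 * g * ρ))*(3 * ρ ^ 2)/2 * Real.cos ((N:ℝ)*ω*θ + (N:ℝ)*ω*s) := by
      intro θ
      rw [hF12, e1 θ, e3 θ, e4 θ]
      linear_combination key12 ω θ ((N:ℝ)*ω*s)
        ((a ^ 2 - 3) * (a ^ 2 * (h - 3 * ρ ^ 2) + 3 * ρ ^ 2)) (3 * ρ ^ 2)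
        ((a ^ 2 - 3) * a ^ 2 * h - 3 * (a ^ 4 - 4 * a ^ 2 + 2) * ρ ^ 2)
        (1 / (4 * a ^ 2 * g * ρ)) (N:ℝ)
    rw [intervalIntegral.integral_congr (g := fun θ =>
        (1 / (4 * a ^ 2 * g * ρ))*((a ^ 2 - 3) * (a ^ 2 * (h - 3 * ρ ^ 2) + 3 * ρ ^ 2))/2
            * Real.cos (((N:ℝ)+2)*ω*θ + (N:ℝ)*ω*s)
        + (1 / (4 * a ^ 2 * g * ρ))*((a ^ 2 - 3) * (a ^ 2 * (h - 3 * ρ ^ 2) + 3 * ρ ^ 2))/2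
            * Real.cos (((N:ℝ)-2)*ω*θ + (N:ℝ)*ω*s)
        + (1 / (4 * a ^ 2 * g * ρ))*((a ^ 2 - 3) * a ^ 2 * h - 3 * (a ^ 4 - 4 * a ^ 2 + 2) * ρ ^ 2)
            * Real.cos ((N:ℝ)*ω*θ + (N:ℝ)*ω*s)
        + (1 / (4 * a ^ 2 * g * ρ))*(3 * ρ ^ 2)/2 * Real.cos (3*(N:ℝ)*ω*θ + 3*((N:ℝ)*ω*s))
        + (1 / (4 * a ^ 2 * g * ρ))*(3 * ρ ^ 2)/2 * Real.cos ((N:ℝ)*ω*θ + (N:ℝ)*ω*s))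
      (fun θ _ => heq θ)]
    exact int5 (by fun_prop) (by fun_prop) (by fun_prop) (by fun_prop) (by fun_prop)
      (by rw [intervalIntegral.integral_const_mul, Icos_zero T _ _ ((N:ℤ)+2) bN2p mN2p, mul_zero])
      (by rw [intervalIntegral.integral_const_mul, Icos_zero T _ _ ((N:ℤ)-2) bN2m mN2m, mul_zero])
      (by rw [intervalIntegral.integral_const_mul, Icos_zero T _ _ (N:ℤ) bN mN, mul_zero])
      (by rw [intervalIntegral.integral_const_mul, Icos_zero T _ _ (3*(N:ℤ)) b3N m3N, mul_zero])
      (by rw [intervalIntegral.integral_const_mul, Icos_zero T _ _ (N:ℤ) bN mN, mul_zero])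
end

section
/- For a = √5 and h = 1, define f₁(ρ,s) = (5 − 4ρ²)·sin(2√(2/5)·s)/(10√10) and f₂(ρ,s) = (5 − 12ρ²)·cos(2√(2/5)·s)/(40ρ) on the set ρ ≠ 0. Then the point (ρ̃, s̃) = (√(5/12), −π√(5/2)) satisfies f₁(ρ̃, s̃) = 0 and f₂(ρ̃, s̃) = 0, and the Jacobian determinant of the map (ρ,s) ↦ (f₁(ρ,s), f₂(ρ,s)) at (ρ̃, s̃) is nonzero; i.e., (ρ̃, s̃) is a simple zero of the averaged system: ∂f₁/∂ρ·∂f₂/∂s − ∂f₁/∂s·∂f₂/∂ρ ≠ 0 at (ρ̃, s̃). -/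
/-!
With `ω = 2√(2/5)` one has `ω s̃ = -2π`, so `sin (ω s̃) = 0` and `cos (ω s̃) = 1`, while
`ρ̃² = 5/12` kills the factor `5 - 12ρ²`. Both components separate variables, so at such a point
the Jacobian reduces to the cross term `-∂ₛf₁ ∂ᵨf₂ = (5/3)/(10√10) · ω · 3/5 ≠ 0`.
-/

noncomputable def jacobianDet (f g : ℝ → ℝ → ℝ) (ρ s : ℝ) : ℝ :=
  deriv (fun ρ => f ρ s) ρ * deriv (g ρ) s - deriv (f ρ) s * deriv (fun ρ => g ρ s) ρ

theorem HasDerivAt.div_of_eq_zero {q d : ℝ → ℝ} {q' x : ℝ} (hq : HasDerivAt q q' x)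
    (hd : DifferentiableAt ℝ d x) (hqx : q x = 0) (hdx : d x ≠ 0) :
    HasDerivAt (fun y => q y / d y) (q' / d x) x := by
  refine (hq.div hd.hasDerivAt hdx).congr_deriv ?_
  rw [hqx]
  field_simp
  ring

theorem jacobianDet_mul_of_eq_zero {u v w z : ℝ → ℝ} {ρ₀ s₀ v' w' : ℝ}
    (hv : HasDerivAt v v' s₀) (hw : HasDerivAt w w' ρ₀) (hv₀ : v s₀ = 0) (hw₀ : w ρ₀ = 0) :
    jacobianDet (fun ρ s => u ρ * v s) (fun ρ s => w ρ * z s) ρ₀ s₀ =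
      -(u ρ₀ * v' * (w' * z s₀)) := by
  simp only [jacobianDet, hv₀, hw₀, mul_zero, zero_mul, deriv_const',
    (hv.const_mul (u ρ₀)).deriv, (hw.mul_const (z s₀)).deriv]
  ring

open Real in
/-- for `a = √5`, `h = 1`, the point
`(ρ̃, s̃) = (√(5/12), −π√(5/2))` is a simple zero of the averaged system
`f₁(ρ,s) = (5 − 4ρ²) sin(2√(2/5)s)/(10√10)`,
`f₂(ρ,s) = (5 − 12ρ²) cos(2√(2/5)s)/(40ρ)`:
both functions vanish there and the Jacobian determinant of `(f₁,f₂)` with respect to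
`(ρ,s)` is nonzero there. -/
theorem simple_zero_a_sqrt5 (f₁ f₂ : ℝ → ℝ → ℝ)
    (hf₁ : ∀ ρ s : ℝ, f₁ ρ s =
      (5 - 4 * ρ ^ 2) * Real.sin (2 * Real.sqrt (2 / 5) * s) / (10 * Real.sqrt 10))
    (hf₂ : ∀ ρ s : ℝ, f₂ ρ s =
      (5 - 12 * ρ ^ 2) * Real.cos (2 * Real.sqrt (2 / 5) * s) / (40 * ρ))
    (ρt st : ℝ) (hρt : ρt = Real.sqrt (5 / 12)) (hst : st = -π * Real.sqrt (5 / 2)) :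
    f₁ ρt st = 0 ∧ f₂ ρt st = 0 ∧
    deriv (fun ρ => f₁ ρ st) ρt * deriv (fun s => f₂ ρt s) st -
      deriv (fun s => f₁ ρt s) st * deriv (fun ρ => f₂ ρ st) ρt ≠ 0 := by
  set ω := 2 * √(2 / 5)
  have hρt_pos : 0 < ρt := hρt ▸ by positivity
  have hρt_sq : ρt ^ 2 = 5 / 12 := by rw [hρt, sq_sqrt (by norm_num)]
  have hωst : ω * st = -(2 * π) := by
    have : √(2 / 5) * √(5 / 2) = 1 := by rw [← sqrt_mul (by norm_num)]; norm_num
    rw [hst]; linear_combination (-(2 * π)) * this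
  have hsin : sin (ω * st) = 0 := by rw [hωst, sin_neg, sin_two_pi, neg_zero]
  have hcos : cos (ω * st) = 1 := by rw [hωst, cos_neg, cos_two_pi]
  have hq : 5 - 12 * ρt ^ 2 = 0 := by rw [hρt_sq]; norm_num
  have hf₁' : f₁ = fun ρ s => (5 - 4 * ρ ^ 2) / (10 * √10) * sin (ω * s) := by
    ext ρ s; rw [hf₁]; ring
  have hf₂' : f₂ = fun ρ s => (5 - 12 * ρ ^ 2) / (40 * ρ) * cos (ω * s) := by
    ext ρ s; rw [hf₂]; ring
  have hv : HasDerivAt (fun s => sin (ω * s)) (cos (ω * st) * ω) st := by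
    simpa using ((hasDerivAt_id st).const_mul ω).sin
  have hw : HasDerivAt (fun ρ => (5 - 12 * ρ ^ 2) / (40 * ρ)) (-(24 * ρt) / (40 * ρt)) ρt := by
    refine HasDerivAt.div_of_eq_zero ?_ (by fun_prop) hq (by positivity)
    exact (((hasDerivAt_pow 2 ρt).const_mul 12).const_sub 5).congr_deriv (by norm_num; ring)
  refine ⟨by rw [hf₁, hsin]; ring, by rw [hf₂, hq]; ring, ?_⟩
  change jacobianDet f₁ f₂ ρt st ≠ 0
  rw [hf₁', hf₂', jacobianDet_mul_of_eq_zero hv hw hsin (by rw [hq, zero_div]), hcos,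
    hρt_sq, show -(24 * ρt) / (40 * ρt) = -(3 / 5) by field_simp; ring]
  norm_num
  positivity
end
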